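/- arXiv:2305.01008 — 7 statements merged into one kernel-verified Lean document; each statement's English description precedes it below -/
import Mathlib

section
/- A function g from admissible sets on [n] to the integers is the rank function g_D of some delta-matroid D on [n] if and only if: (1) g(∅,∅) = 0 (normalization); (2) |g(S)| ≤ 1 whenever |S| = 1 (boundedness); (3) g(S) + g(T) ≥ g(S ⊓ T) + g(S ⊔ T) for all admissible S, T (bisubmodularity); and (4) g(S) ≡ |S| (mod 2) for all admissible S (parity). -/
open Finset
open scoped symmDiff

/-- The rank-type function of a nonempty family `G` of subsets of `Fin n`, evaluated on an
admissible set `(Sp, Sn)`: `max_{F ∈ G} (|Sp ∩ F| + |Sn \ F| − |Sn ∩ F| − |Sp \ F|)`.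
(Junk value `0` when the family is empty.) -/
noncomputable def gFam {n : ℕ} (G : Finset (Finset (Fin n))) (Sp Sn : Finset (Fin n)) : ℤ :=
  if h : G.Nonempty then
    G.sup' h fun F => ((Sp ∩ F).card : ℤ) + ((Sn \ F).card : ℤ)
      - ((Sn ∩ F).card : ℤ) - ((Sp \ F).card : ℤ)
  else 0

/-- A delta-matroid on `[n]`: a nonempty family of subsets of `Fin n` (each `F` encoding the
size-`n` admissible set `(F, [n] \ F)`), satisfying the symmetric exchange axiom. -/
structure DeltaMatroid (n : ℕ) where
  feas : Finset (Finset (Fin n))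
  nonempty : feas.Nonempty
  exchange : ∀ F₁ ∈ feas, ∀ F₂ ∈ feas, ∀ x ∈ F₁ ∆ F₂, ∃ y ∈ F₁ ∆ F₂, F₁ ∆ {x, y} ∈ feas

/-- The rank function `g_D` of a delta-matroid, on admissible sets `(Sp, Sn)`. -/
noncomputable def DeltaMatroid.g {n : ℕ} (D : DeltaMatroid n) :
    Finset (Fin n) → Finset (Fin n) → ℤ :=
  gFam D.feas

/-!
Encode an admissible set as its sign vector `s : α → SignType` and a feasible set `F` as the
full sign vector `signOf F`; then `S ⊓ T`, `S ⊔ T` become `meet s t`, `join s t`, and the rank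
of a family is the maximum over `F` of the pairing `⟨s, signOf F⟩ = ∑ₐ s a · (signOf F) a`.

Since `meet s t + join s t = s + t` pointwise, each pairing is modular. For a delta-matroid,
choose maximizers `F₁` of `s ⊓ t` and `F₂` of `s ⊔ t` with `|F₁ ∆ F₂|` minimal; symmetric
exchange would otherwise produce a closer pair of maximizers, so `F₁ = F₂`, and bisubmodularity
follows from modularity at `F₁`.

Conversely, bisubmodularity against singletons, boundedness and parity give
`|g (S + x) - g S| = 1`, so `|g T - g S| ≤ |T| - |S|` for `S ⊆ T`. Call `S` tight if
`g S = |S|`. Bisubmodularity of `S + x⁺` and `S + x⁻` shows that a tight set extends by one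
element to a tight set, hence to a tight full set: these are the feasible sets, and the Lipschitz
bound shows that no feasible set has pairing with `T` above `g T`. Deleting elements whose
deletion raises `g` leads from any `T` to a tight `M ⊆ T` with `g T = 2|M| - |T|` (when no
deletion raises `g`, bisubmodularity shows that `T` is tight), and a feasible extension of `M`
attains `g T`. The exchange axiom comes from the same construction applied to `T = F₁ ∆ {x}`,
starting from the tight part where `T` agrees with `F₂`.
-/

open Function (update)

namespace SignVec

section Order

variable {α : Type*} {s t u : α → SignType}

def meet (s t : α → SignType) : α → SignType := fun a => if s a = t a then s a else 0

def join (s t : α → SignType) : α → SignType :=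
  fun a => if s a = 0 then t a else if t a = -s a then 0 else s a

/-- The inclusion `S ⊆ T` of admissible sets. -/
def Conforms (s t : α → SignType) : Prop := ∀ a, s a ≠ 0 → t a = s a

@[simp] lemma meet_apply (a : α) : meet s t a = if s a = t a then s a else 0 := rfl

@[simp] lemma join_apply (a : α) :
    join s t a = if s a = 0 then t a else if t a = -s a then 0 else s a :=
  rfl

lemma coe_meet_add_coe_join (a : α) : (meet s t a : ℤ) + join s t a = s a + t a := by
  simp only [meet_apply, join_apply]
  generalize s a = p; generalize t a = q; revert p q; decide

lemma join_eq_meet_of_meet_ne_zero {a : α} (h : meet s t a ≠ 0) : join s t a = meet s t a := by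
  simp only [meet_apply, join_apply] at h ⊢
  generalize s a = p at h ⊢; generalize t a = q at h ⊢; revert p q; decide

lemma meet_conforms_left (s t : α → SignType) : Conforms (meet s t) s := by
  intro a ha; simp only [meet_apply] at ha ⊢; split_ifs at ha ⊢ <;> simp_all

lemma meet_conforms_right (s t : α → SignType) : Conforms (meet s t) t := by
  intro a ha; simp only [meet_apply] at ha ⊢; split_ifs at ha ⊢ <;> simp_all

lemma zero_conforms (s : α → SignType) : Conforms 0 s := fun _ h => absurd rfl h

lemma Conforms.trans (h₁ : Conforms s t) (h₂ : Conforms t u) : Conforms s u := fun a ha =>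
  (h₂ a (h₁ a ha ▸ ha)).trans (h₁ a ha)

lemma conforms_meet (h₁ : Conforms s t) (h₂ : Conforms s u) : Conforms s (meet t u) := by
  intro a ha; simp [h₁ a ha, h₂ a ha]

lemma meet_eq_left_of_conforms (h : Conforms s t) : meet s t = s := by
  funext a; by_cases ha : s a = 0 <;> simp [ha, h a]

end Order

section Update

variable {α : Type*} [DecidableEq α] {s t : α → SignType} {x : α}

lemma meet_update_zero_single (t : α → SignType) (x : α) :
    meet (update t x 0) (Pi.single x (t x)) = 0 := by
  funext a
  rcases eq_or_ne a x with rfl | ha <;> simp [*]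

lemma join_update_zero_single (t : α → SignType) (x : α) :
    join (update t x 0) (Pi.single x (t x)) = t := by
  funext a
  rcases eq_or_ne a x with rfl | ha <;> simp [*]
  cases t a <;> simp_all

lemma meet_single_neg (t : α → SignType) (x : α) : meet t (Pi.single x (-t x)) = 0 := by
  funext a
  rcases eq_or_ne a x with rfl | ha <;> simp [*]

lemma join_single_neg (t : α → SignType) (x : α) :
    join t (Pi.single x (-t x)) = update t x 0 := by
  funext a
  rcases eq_or_ne a x with rfl | ha <;> simp [*]
  cases t a <;> simp_all

lemma meet_update_zero_update_zero (t : α → SignType) (x z : α) :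
    meet (update t z 0) (update t x 0) =
      update (update t x 0) z 0 := by
  funext a
  rcases eq_or_ne a z with rfl | haz
  · simp
  rcases eq_or_ne a x with rfl | hax <;> simp [*]

lemma join_update_zero_update_zero (t : α → SignType) {x z : α} (hxz : x ≠ z) :
    join (update t z 0) (update t x 0) = t := by
  funext a
  rcases eq_or_ne a z with rfl | haz
  · simp [Function.update_of_ne hxz.symm]
  rcases eq_or_ne a x with rfl | hax <;> simp [*] <;> cases t a <;> simp_all

lemma meet_update_update_neg (hx : s x = 0) :
    meet (update s x 1) (update s x (-1)) = s := by
  funext a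
  rcases eq_or_ne a x with rfl | ha <;> simp [*]

lemma join_update_update_neg (hx : s x = 0) :
    join (update s x 1) (update s x (-1)) = s := by
  funext a
  rcases eq_or_ne a x with rfl | ha <;> simp [*]
  cases s a <;> simp_all

lemma Conforms.update_zero (h : Conforms s t) (hx : s x = 0) :
    Conforms s (update t x 0) := by
  intro a ha
  rw [Function.update_of_ne (by rintro rfl; exact ha hx), h a ha]

lemma conforms_update_zero (t : α → SignType) (x : α) : Conforms (update t x 0) t := by
  intro a ha
  rw [Function.update_of_ne (by rintro rfl; simp at ha)]

lemma conforms_update (hx : s x = 0) (ε : SignType) : Conforms s (update s x ε) := by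
  intro a ha
  rw [Function.update_of_ne (by rintro rfl; exact ha hx)]

def signOf (F : Finset α) : α → SignType := fun a => if a ∈ F then 1 else -1

lemma signOf_ne_zero (F : Finset α) (a : α) : signOf F a ≠ 0 := by
  unfold signOf; split_ifs <;> decide

lemma signOf_eq_signOf_iff {A F : Finset α} {a : α} :
    signOf A a = signOf F a ↔ (a ∈ A ↔ a ∈ F) := by
  unfold signOf; by_cases hA : a ∈ A <;> by_cases hF : a ∈ F <;> simp [hA, hF]

lemma signOf_eq_neg_of_mem_symmDiff {F₁ F₂ : Finset α} {z : α} (hz : z ∈ F₁ ∆ F₂) :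
    signOf F₂ z = -signOf F₁ z := by
  unfold signOf; rw [mem_symmDiff] at hz; rcases hz with ⟨h₁, h₂⟩ | ⟨h₁, h₂⟩ <;> simp [h₁, h₂]

end Update

section Size

variable {α : Type*} [Fintype α] {s t : α → SignType}

def size (s : α → SignType) : ℕ := #{a | s a ≠ 0}

def pairing (s t : α → SignType) : ℤ := ∑ a, (s a : ℤ) * t a

lemma size_zero : size (0 : α → SignType) = 0 := by simp [size]

lemma size_le_card (s : α → SignType) : size s ≤ Fintype.card α := card_le_univ _

lemma size_eq_card_iff : size s = Fintype.card α ↔ ∀ a, s a ≠ 0 := by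
  rw [size, card_eq_iff_eq_univ, filter_eq_self]
  simp

lemma coe_size (s : α → SignType) : (size s : ℤ) = ∑ a, if s a ≠ 0 then 1 else 0 := by
  simp [size, card_filter]

lemma Conforms.size_le (h : Conforms s t) : size s ≤ size t :=
  card_le_card fun a ha => by simp only [mem_filter, mem_univ, true_and] at ha ⊢; rwa [h a ha]

lemma Conforms.eq_or_exists (h : Conforms s t) : t = s ∨ ∃ x, s x = 0 ∧ t x ≠ 0 := by
  by_contra! hne
  obtain ⟨a, ha⟩ := Function.ne_iff.1 hne.1
  by_cases hs : s a = 0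
  · exact ha (by rw [hs, hne.2 a hs])
  · exact ha (h a hs)

lemma pairing_zero_left (f : α → SignType) : pairing 0 f = 0 := by simp [pairing]

lemma pairing_meet_add_pairing_join (s t f : α → SignType) :
    pairing (meet s t) f + pairing (join s t) f = pairing s f + pairing t f := by
  simp only [pairing, ← sum_add_distrib, ← add_mul, coe_meet_add_coe_join]

end Size

section SizeUpdate

variable {α : Type*} [Fintype α] [DecidableEq α] {s t : α → SignType} {x : α}

lemma size_update_zero (hx : t x ≠ 0) : size (update t x 0) + 1 = size t := by
  have : ({a | update t x 0 a ≠ 0} : Finset α) = ({a | t a ≠ 0} : Finset α).erase x := by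
    ext a; rcases eq_or_ne a x with rfl | ha <;> simp [*]
  rw [size, size, this, card_erase_add_one (by simpa using hx)]

lemma size_single {ε : SignType} (hε : ε ≠ 0) : size (Pi.single x ε) = 1 := by
  rw [size, card_eq_one]
  exact ⟨x, by ext a; rcases eq_or_ne a x with rfl | ha <;> simp [*]⟩

lemma size_signOf (F : Finset α) : size (signOf F) = Fintype.card α := by
  simp [size, signOf_ne_zero]

@[elab_as_elim]
theorem Conforms.induction_on {P : (α → SignType) → Prop} (h : Conforms s t)
    (step : ∀ t, Conforms s t → (∀ x, s x = 0 → t x ≠ 0 → P (update t x 0)) → P t) :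
    P t := by
  induction hk : size t using Nat.strong_induction_on generalizing t with
  | _ k ih =>
    refine step t h fun x hsx htx => ih _ ?_ (h.update_zero hsx) rfl
    have := size_update_zero htx
    omega

lemma pairing_signOf (u : α → SignType) (F : Finset α) :
    pairing u (signOf F) = 2 * size (meet u (signOf F)) - size u := by
  rw [pairing, coe_size, coe_size, mul_sum, ← sum_sub_distrib]
  refine sum_congr rfl fun a _ => ?_
  unfold signOf
  by_cases haF : a ∈ F <;> simp only [haF, meet_apply, if_true, if_false] <;>
    cases u a <;> decide

lemma pairing_signOf_symmDiff (u : α → SignType) (F B : Finset α) :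
    pairing u (signOf (F ∆ B)) = pairing u (signOf F) - 2 * ∑ a ∈ B, (u a : ℤ) * signOf F a := by
  have key : ∀ a, (u a : ℤ) * signOf (F ∆ B) a =
      u a * signOf F a - 2 * if a ∈ B then (u a : ℤ) * signOf F a else 0 := by
    intro a; unfold signOf
    by_cases haB : a ∈ B <;> by_cases haF : a ∈ F <;> simp [mem_symmDiff, haB, haF] <;> ring
  rw [pairing, pairing, sum_congr rfl fun a _ => key a, sum_sub_distrib, ← mul_sum, sum_ite_mem,
    univ_inter]

lemma pairing_signOf_signOf (A F : Finset α) :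
    pairing (signOf A) (signOf F) = Fintype.card α - 2 * #(A ∆ F) := by
  have key : ∀ a, (signOf A a : ℤ) * signOf F a = 1 - 2 * if a ∈ A ∆ F then 1 else 0 := by
    intro a; unfold signOf
    by_cases haA : a ∈ A <;> by_cases haF : a ∈ F <;> simp [mem_symmDiff, haA, haF]
  rw [pairing, sum_congr rfl fun a _ => key a, sum_sub_distrib, ← mul_sum, sum_boole,
    filter_mem_eq_inter, univ_inter, sum_const, card_univ]
  simp

end SizeUpdate

end SignVec

open SignVec

lemma SignType.coe_mul_coe_le_one (p q : SignType) : (p : ℤ) * q ≤ 1 := by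
  cases p <;> cases q <;> decide

lemma SignType.coe_mul_coe_eq_neg_one {p q : SignType} (hp : p ≠ 0) (hq : q ≠ 0)
    (h : (p : ℤ) * q ≠ 1) : (p : ℤ) * q = -1 := by
  cases p <;> cases q <;> simp_all

structure IsDeltaRank {α : Type*} [Fintype α] (G : (α → SignType) → ℤ) : Prop where
  map_zero : G 0 = 0
  abs_le_one_of_size_eq_one : ∀ s, size s = 1 → |G s| ≤ 1
  meet_add_join_le : ∀ s t, G (meet s t) + G (join s t) ≤ G s + G t
  modEq_size : ∀ s, G s ≡ size s [ZMOD 2]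

def SymmetricExchange {α : Type*} [DecidableEq α] (𝓕 : Finset (Finset α)) : Prop :=
  ∀ F₁ ∈ 𝓕, ∀ F₂ ∈ 𝓕, ∀ x ∈ F₁ ∆ F₂, ∃ y ∈ F₁ ∆ F₂, F₁ ∆ {x, y} ∈ 𝓕

section Families

variable {α : Type*} [Fintype α] [DecidableEq α]

def familyRank (𝓕 : Finset (Finset α)) (h : 𝓕.Nonempty) (u : α → SignType) : ℤ :=
  𝓕.sup' h fun F => pairing u (signOf F)

def maximizers (𝓕 : Finset (Finset α)) (u : α → SignType) : Finset (Finset α) :=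
  {F ∈ 𝓕 | ∀ F' ∈ 𝓕, pairing u (signOf F') ≤ pairing u (signOf F)}

def feasibleSets (G : (α → SignType) → ℤ) : Finset (Finset α) :=
  {F | G (signOf F) = Fintype.card α}

@[simp] lemma mem_feasibleSets {G : (α → SignType) → ℤ} {F : Finset α} :
    F ∈ feasibleSets G ↔ G (signOf F) = Fintype.card α := by
  simp [feasibleSets]

end Families

lemma exists_pair_eq_symmDiff {α : Type*} [DecidableEq α] {x : α} {B D : Finset α}
    (hx : x ∈ D) (hB : #B ≤ 1) (hBD : ∀ y ∈ B, y ≠ x ∧ y ∈ D) :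
    ∃ y ∈ D, {x, y} = {x} ∆ B := by
  rcases B.eq_empty_or_nonempty with rfl | ⟨y, hy⟩
  · exact ⟨x, hx, by rw [pair_eq_singleton, ← bot_eq_empty, symmDiff_bot]⟩
  · obtain rfl : B = {y} :=
      eq_singleton_iff_unique_mem.2 ⟨hy, fun z hz => card_le_one.1 hB z hz y hy⟩
    obtain ⟨hyx, hyD⟩ := hBD y hy
    refine ⟨y, hyD, ?_⟩
    rw [(disjoint_singleton.2 hyx.symm).symmDiff_eq_sup, sup_eq_union, insert_eq]

namespace IsDeltaRank

variable {α : Type*} [Fintype α] [DecidableEq α] {G : (α → SignType) → ℤ} (hG : IsDeltaRank G)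
  {s t m : α → SignType} {x : α}
include hG

theorem abs_sub_update_zero (hx : t x ≠ 0) : |G t - G (update t x 0)| = 1 := by
  have h₁ := hG.meet_add_join_le (update t x 0) (Pi.single x (t x))
  have h₂ := hG.meet_add_join_le t (Pi.single x (-t x))
  rw [meet_update_zero_single, join_update_zero_single, hG.map_zero] at h₁
  rw [meet_single_neg, join_single_neg, hG.map_zero] at h₂
  have b₁ := abs_le.1 (hG.abs_le_one_of_size_eq_one _ (size_single (x := x) hx))
  have b₂ := abs_le.1 (hG.abs_le_one_of_size_eq_one _
    (size_single (x := x) (SignType.neg_eq_zero_iff.not.2 hx)))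
  have p₁ := hG.modEq_size t
  have p₂ := hG.modEq_size (update t x 0)
  have hsize := size_update_zero hx
  unfold Int.ModEq at p₁ p₂
  rw [abs_eq zero_le_one]
  omega

theorem abs_sub_le_of_conforms (h : Conforms s t) : |G t - G s| ≤ size t - size s := by
  refine h.induction_on fun t hst ih => ?_
  rcases hst.eq_or_exists with rfl | ⟨x, hsx, htx⟩
  · simp
  · have h₁ := abs_le.1 (ih x hsx htx)
    have h₂ := abs_le.1 (hG.abs_sub_update_zero htx).le
    have hsize := size_update_zero htx
    rw [abs_le]
    omega

theorem le_size (s : α → SignType) : G s ≤ size s := by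
  have := abs_le.1 (hG.abs_sub_le_of_conforms (zero_conforms s))
  rw [hG.map_zero, size_zero] at this
  omega

theorem pairing_signOf_le {F : Finset α} (hF : G (signOf F) = Fintype.card α)
    (s : α → SignType) : pairing s (signOf F) ≤ G s := by
  have h₁ := abs_le.1 (hG.abs_sub_le_of_conforms (meet_conforms_right s (signOf F)))
  have h₂ := abs_le.1 (hG.abs_sub_le_of_conforms (meet_conforms_left s (signOf F)))
  rw [hF, size_signOf] at h₁
  rw [pairing_signOf]
  omega

theorem eq_size_of_conforms_signOf {F : Finset α} (hF : G (signOf F) = Fintype.card α)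
    (h : Conforms s (signOf F)) : G s = size s := by
  have := hG.pairing_signOf_le hF s
  rw [pairing_signOf, meet_eq_left_of_conforms h] at this
  have := hG.le_size s
  omega

theorem exists_update_eq_add_one (hx : s x = 0) :
    ∃ ε ≠ 0, G (update s x ε) = G s + 1 := by
  have h := hG.meet_add_join_le (update s x 1) (update s x (-1))
  rw [meet_update_update_neg hx, join_update_update_neg hx] at h
  have hs : update s x 0 = s := hx ▸ Function.update_eq_self x s
  have h₁ := hG.abs_sub_update_zero (t := update s x 1) (x := x) (by simp)
  have h₂ := hG.abs_sub_update_zero (t := update s x (-1)) (x := x) (by simp)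
  rw [Function.update_idem, hs, abs_eq zero_le_one] at h₁ h₂
  by_contra! hne
  have := hne 1 one_ne_zero
  have := hne (-1) (by decide)
  omega

theorem exists_signOf_of_eq_size (hm : G m = size m) :
    ∃ F, G (signOf F) = Fintype.card α ∧ Conforms m (signOf F) := by
  induction hk : Fintype.card α - size m generalizing m with
  | zero =>
    have hfull := size_eq_card_iff.1 (le_antisymm (size_le_card m) (by omega))
    set F : Finset α := {a | m a = 1}
    have hF : signOf F = m := by
      funext a
      have := hfull a
      simp only [signOf, F, mem_filter, mem_univ, true_and]
      revert this
      cases m a <;> decide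
    refine ⟨F, ?_, ?_⟩ <;> rw [hF]
    · rw [hm, size_eq_card_iff.2 hfull]
    · exact fun _ _ => rfl
  | succ k ih =>
    obtain ⟨x, hx⟩ : ∃ x, m x = 0 := by
      by_contra! h
      rw [size_eq_card_iff.2 h] at hk
      omega
    obtain ⟨ε, hε, hG'⟩ := hG.exists_update_eq_add_one hx
    have hsize := size_update_zero (t := update m x ε) (x := x) (by simpa using hε)
    have hm' : update m x 0 = m := hx ▸ Function.update_eq_self x m
    rw [Function.update_idem, hm'] at hsize
    obtain ⟨F, hF, hmF⟩ := ih (m := update m x ε) (by omega) (by omega)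
    exact ⟨F, hF, (conforms_update hx ε).trans hmF⟩

/-- Bisubmodularity of `t - z` and `t - x` passes the hypothesis on `t` down to `t - x`. -/
theorem eq_size_of_forall_update_zero (hst : Conforms s t) (hs : G s = size s)
    (H : ∀ x, s x = 0 → t x ≠ 0 → G (update t x 0) = G t - 1) : G t = size t := by
  revert H
  refine hst.induction_on fun t hst ih H => ?_
  rcases hst.eq_or_exists with rfl | ⟨x, hsx, htx⟩
  · exact hs
  have H' : ∀ z, s z = 0 → update t x 0 z ≠ 0 →
      G (update (update t x 0) z 0) = G (update t x 0) - 1 := by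
    intro z hsz htz
    have hzx : z ≠ x := by rintro rfl; simp at htz
    have htz' : t z ≠ 0 := by rwa [Function.update_of_ne hzx] at htz
    have hb := hG.meet_add_join_le (update t z 0) (update t x 0)
    rw [meet_update_zero_update_zero, join_update_zero_update_zero _ hzx.symm] at hb
    have := abs_le.1 (hG.abs_sub_update_zero htz).le
    have := H z hsz htz'
    have := H x hsx htx
    omega
  have := ih x hsx htx H'
  have := H x hsx htx
  have := size_update_zero htx
  omega

theorem exists_eq_size_between (hst : Conforms s t) (hs : G s = size s) :
    ∃ m, Conforms s m ∧ Conforms m t ∧ G m = size m ∧ G t = 2 * size m - size t := by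
  refine hst.induction_on fun t hst ih => ?_
  by_cases ht : G t = size t
  · exact ⟨t, hst, fun _ _ => rfl, ht, by omega⟩
  obtain ⟨x, hsx, htx, hx⟩ : ∃ x, s x = 0 ∧ t x ≠ 0 ∧ G (update t x 0) ≠ G t - 1 := by
    by_contra! H
    exact ht (hG.eq_size_of_forall_update_zero hst hs H)
  obtain ⟨m, hsm, hmt, hm, heq⟩ := ih x hsx htx
  refine ⟨m, hsm, hmt.trans (conforms_update_zero t x), hm, ?_⟩
  have := hG.abs_sub_update_zero htx
  have := size_update_zero htx
  rw [abs_eq zero_le_one] at *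
  omega

theorem exists_signOf_le_pairing (hst : Conforms s t) (hs : G s = size s) :
    ∃ F, G (signOf F) = Fintype.card α ∧ Conforms s (signOf F) ∧
      G t ≤ pairing t (signOf F) := by
  obtain ⟨m, hsm, hmt, hm, heq⟩ := hG.exists_eq_size_between hst hs
  obtain ⟨F, hF, hmF⟩ := hG.exists_signOf_of_eq_size hm
  refine ⟨F, hF, hsm.trans hmF, ?_⟩
  have := (conforms_meet hmt hmF).size_le
  rw [pairing_signOf]
  omega

theorem feasibleSets_nonempty : (feasibleSets G).Nonempty := by
  obtain ⟨F, hF, -⟩ := hG.exists_signOf_of_eq_size (m := 0) (by rw [hG.map_zero, size_zero]; rfl)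
  exact ⟨F, mem_feasibleSets.2 hF⟩

theorem familyRank_feasibleSets (h : (feasibleSets G).Nonempty) (t : α → SignType) :
    familyRank (feasibleSets G) h t = G t := by
  refine le_antisymm (sup'_le _ _ fun F hF => hG.pairing_signOf_le (mem_feasibleSets.1 hF) t) ?_
  obtain ⟨F, hF, -, hle⟩ :=
    hG.exists_signOf_le_pairing (zero_conforms t) (by rw [hG.map_zero, size_zero]; rfl)
  exact hle.trans (le_sup' (fun F => pairing t (signOf F)) (mem_feasibleSets.2 hF))

theorem symmetricExchange_feasibleSets : SymmetricExchange (feasibleSets G) := by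
  intro F₁ hF₁ F₂ hF₂ x hx
  rw [mem_feasibleSets] at hF₁ hF₂
  set A := F₁ ∆ {x} with hA
  -- the part of `A` on which it agrees with `F₂` is tight, since `F₂` is feasible
  obtain ⟨F, hF, hsF, hle⟩ :=
    hG.exists_signOf_le_pairing (meet_conforms_left (signOf A) (signOf F₂))
      (hG.eq_size_of_conforms_signOf hF₂ (meet_conforms_right _ _))
  have hAF₁ : A ∆ F₁ = {x} := by rw [hA, symmDiff_right_comm, symmDiff_self, bot_symmDiff]
  have hlow := hG.pairing_signOf_le hF₁ (signOf A)
  rw [pairing_signOf_signOf, hAF₁, card_singleton] at hlow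
  rw [pairing_signOf_signOf] at hle
  have hdiff : ∀ y ∈ A ∆ F, y ≠ x ∧ y ∈ F₁ ∆ F₂ := by
    intro y hy
    have hs : meet (signOf A) (signOf F₂) y = 0 := by
      by_contra hne
      have hAF := (hsF y hne).trans (meet_conforms_left (signOf A) (signOf F₂) y hne).symm
      rw [signOf_eq_signOf_iff] at hAF
      rw [mem_symmDiff] at hy
      tauto
    simp only [meet_apply, signOf_ne_zero, ite_eq_right_iff, imp_false,
      signOf_eq_signOf_iff] at hs
    simp only [hA, mem_symmDiff, mem_singleton] at hs hx ⊢
    have hyx : y ≠ x := by rintro rfl; tauto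
    simp only [hyx, not_false_eq_true, and_true, false_and, or_false] at hs
    tauto
  obtain ⟨y, hy, hxy⟩ := exists_pair_eq_symmDiff hx (by omega) hdiff
  refine ⟨y, hy, ?_⟩
  rwa [hxy, ← symmDiff_assoc, ← hA, symmDiff_symmDiff_cancel_left, mem_feasibleSets]

end IsDeltaRank

section FamilyRank

variable {α : Type*} [Fintype α] [DecidableEq α] {𝓕 : Finset (Finset α)} {u : α → SignType}

lemma maximizers_nonempty (h : 𝓕.Nonempty) (u : α → SignType) : (maximizers 𝓕 u).Nonempty :=
  let ⟨F, hF, hmax⟩ := exists_max_image 𝓕 (fun F => pairing u (signOf F)) h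
  ⟨F, mem_filter.2 ⟨hF, hmax⟩⟩

lemma familyRank_eq_of_mem_maximizers (h : 𝓕.Nonempty) {F : Finset α}
    (hF : F ∈ maximizers 𝓕 u) : familyRank 𝓕 h u = pairing u (signOf F) :=
  le_antisymm (sup'_le _ _ (mem_filter.1 hF).2)
    (le_sup' (fun F => pairing u (signOf F)) (mem_filter.1 hF).1)

lemma abs_familyRank_le (h : 𝓕.Nonempty) (u : α → SignType) : |familyRank 𝓕 h u| ≤ size u := by
  obtain ⟨F, hF⟩ := maximizers_nonempty h u
  have := (meet_conforms_left u (signOf F)).size_le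
  rw [familyRank_eq_of_mem_maximizers h hF, pairing_signOf, abs_le]
  omega

lemma familyRank_modEq_size (h : 𝓕.Nonempty) (u : α → SignType) :
    familyRank 𝓕 h u ≡ size u [ZMOD 2] := by
  obtain ⟨F, hF⟩ := maximizers_nonempty h u
  rw [familyRank_eq_of_mem_maximizers h hF, pairing_signOf, Int.ModEq]
  omega

namespace SymmetricExchange

variable (hex : SymmetricExchange 𝓕) {F F' : Finset α}
include hex

theorem exists_mem_maximizers_card_symmDiff_lt (hF : F ∈ maximizers 𝓕 u) (hF' : F' ∈ 𝓕)
    {x : α} (hx : x ∈ F ∆ F')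
    (hu : ∀ y ∈ F ∆ F', (u x : ℤ) * signOf F x + u y * signOf F y ≤ 0) :
    ∃ G ∈ maximizers 𝓕 u, #(G ∆ F') < #(F ∆ F') := by
  obtain ⟨hF, hmax⟩ := mem_filter.1 hF
  obtain ⟨y, hy, hG⟩ := hex F hF F' hF' x hx
  have hxy : ({x, y} : Finset α) ⊆ F ∆ F' := insert_subset hx (singleton_subset_iff.2 hy)
  refine ⟨F ∆ {x, y}, mem_filter.2 ⟨hG, fun G hG => (hmax G hG).trans ?_⟩, ?_⟩
  · have : ∑ a ∈ {x, y}, (u a : ℤ) * signOf F a ≤ 0 := by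
      rcases eq_or_ne x y with rfl | hne
      · have := hu x hx
        rw [pair_eq_singleton, sum_singleton]
        omega
      · rw [sum_pair hne]
        exact hu y hy
    rw [pairing_signOf_symmDiff]
    omega
  · rw [symmDiff_right_comm, symmDiff_of_ge hxy]
    exact card_lt_card (sdiff_ssubset hxy (insert_nonempty x {y}))

section Closest

variable (hF : F ∈ maximizers 𝓕 u) (hF' : F' ∈ 𝓕)
  (hclose : ∀ G ∈ maximizers 𝓕 u, #(F ∆ F') ≤ #(G ∆ F'))
include hF hF' hclose

theorem coe_mul_signOf_eq_one {z : α} (hz : z ∈ F ∆ F') (huz : u z ≠ 0) :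
    (u z : ℤ) * signOf F z = 1 := by
  by_contra hne
  have hneg := SignType.coe_mul_coe_eq_neg_one huz (signOf_ne_zero F z) hne
  obtain ⟨G, hG, hlt⟩ := hex.exists_mem_maximizers_card_symmDiff_lt hF hF' hz
    fun y _ => by have := SignType.coe_mul_coe_le_one (u y) (signOf F y); omega
  exact (hclose G hG).not_gt hlt

theorem eq_of_forall_eq_zero (hu : ∀ z ∈ F ∆ F', u z = 0) : F = F' := by
  by_contra hne
  obtain ⟨x, hx⟩ : (F ∆ F').Nonempty :=
    nonempty_iff_ne_empty.2 (by rwa [Ne, ← bot_eq_empty, symmDiff_eq_bot])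
  obtain ⟨G, hG, hlt⟩ := hex.exists_mem_maximizers_card_symmDiff_lt hF hF' hx
    fun y hy => by rw [hu x hx, hu y hy]; simp
  exact (hclose G hG).not_gt hlt

end Closest

/-- Maximizers `F₁` of `meet s t` and `F₂` of `join s t` closest to each other coincide: on
`F₁ ∆ F₂`, where `F₁` and `F₂` have opposite signs, each agrees in sign with the vector it
maximizes, and the two vectors are equal wherever `meet s t` is nonzero. -/
theorem familyRank_meet_add_join_le (h : 𝓕.Nonempty) (s t : α → SignType) :
    familyRank 𝓕 h (meet s t) + familyRank 𝓕 h (join s t) ≤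
      familyRank 𝓕 h s + familyRank 𝓕 h t := by
  obtain ⟨⟨F₁, F₂⟩, hmem, hmin⟩ :=
    exists_min_image (maximizers 𝓕 (meet s t) ×ˢ maximizers 𝓕 (join s t))
      (fun p => #(p.1 ∆ p.2)) ((maximizers_nonempty h _).product (maximizers_nonempty h _))
  obtain ⟨hF₁, hF₂⟩ := mem_product.1 hmem
  have hmem₁ := (mem_filter.1 hF₁).1
  have hmem₂ := (mem_filter.1 hF₂).1
  have hclose₁ : ∀ G ∈ maximizers 𝓕 (meet s t), #(F₁ ∆ F₂) ≤ #(G ∆ F₂) :=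
    fun G hG => hmin (G, F₂) (mem_product.2 ⟨hG, hF₂⟩)
  have hclose₂ : ∀ G ∈ maximizers 𝓕 (join s t), #(F₂ ∆ F₁) ≤ #(G ∆ F₁) := fun G hG => by
    simpa only [symmDiff_comm _ F₁] using hmin (F₁, G) (mem_product.2 ⟨hF₁, hG⟩)
  obtain rfl : F₁ = F₂ := hex.eq_of_forall_eq_zero hF₁ hmem₂ hclose₁ fun z hz => by
    by_contra hne
    have h₁ := hex.coe_mul_signOf_eq_one hF₁ hmem₂ hclose₁ hz hne
    have h₂ := hex.coe_mul_signOf_eq_one hF₂ hmem₁ hclose₂ (symmDiff_comm F₁ F₂ ▸ hz)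
      (join_eq_meet_of_meet_ne_zero hne ▸ hne)
    rw [join_eq_meet_of_meet_ne_zero hne, signOf_eq_neg_of_mem_symmDiff hz,
      SignType.coe_neg] at h₂
    linarith
  rw [familyRank_eq_of_mem_maximizers h hF₁, familyRank_eq_of_mem_maximizers h hF₂,
    pairing_meet_add_pairing_join]
  exact add_le_add (le_sup' (fun F => pairing s (signOf F)) hmem₁)
    (le_sup' (fun F => pairing t (signOf F)) hmem₁)

theorem isDeltaRank_familyRank (h : 𝓕.Nonempty) : IsDeltaRank (familyRank 𝓕 h) where
  map_zero := by simp [familyRank, pairing_zero_left]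
  abs_le_one_of_size_eq_one s hs := by simpa [hs] using abs_familyRank_le h s
  meet_add_join_le := hex.familyRank_meet_add_join_le h
  modEq_size := familyRank_modEq_size h

end SymmetricExchange

end FamilyRank

namespace SignVec

section OfPair

variable {α : Type*} [DecidableEq α] {Sp Sn Tp Tn : Finset α}

/-- The sign vector of the admissible set `(Sp, Sn)`; it is the intended one when `Sp` and `Sn`
are disjoint. -/
def ofPair (Sp Sn : Finset α) : α → SignType :=
  fun a => if a ∈ Sp then 1 else if a ∈ Sn then -1 else 0

lemma ofPair_empty_empty : ofPair (∅ : Finset α) ∅ = 0 := by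
  funext a; simp [ofPair]

lemma meet_ofPair_ofPair (hS : Disjoint Sp Sn) (hT : Disjoint Tp Tn) :
    meet (ofPair Sp Sn) (ofPair Tp Tn) = ofPair (Sp ∩ Tp) (Sn ∩ Tn) := by
  funext a
  have hS := fun hp : a ∈ Sp => disjoint_left.1 hS hp
  have hT := fun hp : a ∈ Tp => disjoint_left.1 hT hp
  by_cases hsp : a ∈ Sp <;> by_cases hsn : a ∈ Sn <;> by_cases htp : a ∈ Tp <;>
    by_cases htn : a ∈ Tn <;> simp_all [ofPair]

lemma join_ofPair_ofPair (hS : Disjoint Sp Sn) (hT : Disjoint Tp Tn) :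
    join (ofPair Sp Sn) (ofPair Tp Tn) =
      ofPair ((Sp ∪ Tp) \ (Sn ∪ Tn)) ((Sn ∪ Tn) \ (Sp ∪ Tp)) := by
  funext a
  have hS := fun hp : a ∈ Sp => disjoint_left.1 hS hp
  have hT := fun hp : a ∈ Tp => disjoint_left.1 hT hp
  by_cases hsp : a ∈ Sp <;> by_cases hsn : a ∈ Sn <;> by_cases htp : a ∈ Tp <;>
    by_cases htn : a ∈ Tn <;> simp_all [ofPair]

end OfPair

section PosNeg

variable {α : Type*} [Fintype α]

def pos (s : α → SignType) : Finset α := {a | s a = 1}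

def neg (s : α → SignType) : Finset α := {a | s a = -1}

lemma mem_pos {s : α → SignType} {a : α} : a ∈ pos s ↔ s a = 1 := by simp [pos]

lemma mem_neg {s : α → SignType} {a : α} : a ∈ neg s ↔ s a = -1 := by simp [neg]

lemma disjoint_pos_neg (s : α → SignType) : Disjoint (pos s) (neg s) := by
  rw [disjoint_left]
  intro a hp hn
  rw [mem_pos] at hp
  rw [mem_neg, hp] at hn
  exact absurd hn (by decide)

end PosNeg

section Encoding

variable {α : Type*} [Fintype α] [DecidableEq α] {Sp Sn Tp Tn : Finset α}

lemma ofPair_pos_neg (s : α → SignType) : ofPair (pos s) (neg s) = s := by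
  funext a
  simp only [ofPair, mem_pos, mem_neg]
  cases s a <;> decide

lemma exists_ofPair (s : α → SignType) : ∃ Sp Sn, Disjoint Sp Sn ∧ ofPair Sp Sn = s :=
  ⟨pos s, neg s, disjoint_pos_neg s, ofPair_pos_neg s⟩

lemma pos_ofPair (h : Disjoint Sp Sn) : pos (ofPair Sp Sn) = Sp := by
  ext a
  rw [mem_pos, ofPair]
  have := fun hp : a ∈ Sp => disjoint_left.1 h hp
  by_cases hp : a ∈ Sp <;> by_cases hn : a ∈ Sn <;> simp_all

lemma neg_ofPair (h : Disjoint Sp Sn) : neg (ofPair Sp Sn) = Sn := by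
  ext a
  rw [mem_neg, ofPair]
  have := fun hp : a ∈ Sp => disjoint_left.1 h hp
  by_cases hp : a ∈ Sp <;> by_cases hn : a ∈ Sn <;> simp_all

lemma size_ofPair (h : Disjoint Sp Sn) : size (ofPair Sp Sn) = #Sp + #Sn := by
  rw [← card_union_of_disjoint h, size]
  congr 1
  ext a
  rw [mem_filter, ofPair]
  by_cases hp : a ∈ Sp <;> by_cases hn : a ∈ Sn <;> simp [hp, hn]

lemma pairing_ofPair_signOf (h : Disjoint Sp Sn) (F : Finset α) :
    pairing (ofPair Sp Sn) (signOf F) =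
      (#(Sp ∩ F) : ℤ) + #(Sn \ F) - #(Sn ∩ F) - #(Sp \ F) := by
  have key : ∀ a, ((ofPair Sp Sn a : ℤ) * signOf F a) =
      (if a ∈ Sp ∩ F then 1 else 0) + (if a ∈ Sn \ F then 1 else 0) -
        (if a ∈ Sn ∩ F then 1 else 0) - (if a ∈ Sp \ F then 1 else 0) := by
    intro a
    have := fun hp : a ∈ Sp => disjoint_left.1 h hp
    by_cases hp : a ∈ Sp <;> by_cases hn : a ∈ Sn <;> by_cases hF : a ∈ F <;>
      simp_all [ofPair, signOf]
  simp only [pairing, key, sum_add_distrib, sum_sub_distrib, sum_boole, filter_mem_eq_inter,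
    univ_inter]

end Encoding

end SignVec

theorem isDeltaRank_comp_pos_neg_iff {α : Type*} [Fintype α] [DecidableEq α]
    (g : Finset α → Finset α → ℤ) :
    IsDeltaRank (fun s => g (pos s) (neg s)) ↔
      (g ∅ ∅ = 0 ∧
        (∀ Sp Sn : Finset α, Disjoint Sp Sn → Sp.card + Sn.card = 1 → |g Sp Sn| ≤ 1) ∧
        (∀ Sp Sn Tp Tn : Finset α, Disjoint Sp Sn → Disjoint Tp Tn →
          g (Sp ∩ Tp) (Sn ∩ Tn) + g ((Sp ∪ Tp) \ (Sn ∪ Tn)) ((Sn ∪ Tn) \ (Sp ∪ Tp))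
            ≤ g Sp Sn + g Tp Tn) ∧
        (∀ Sp Sn : Finset α, Disjoint Sp Sn →
          g Sp Sn ≡ ((Sp.card : ℤ) + (Sn.card : ℤ)) [ZMOD 2])) := by
  have hg : ∀ {Sp Sn : Finset α}, Disjoint Sp Sn →
      g Sp Sn = g (pos (ofPair Sp Sn)) (neg (ofPair Sp Sn)) :=
    fun h => by rw [pos_ofPair h, neg_ofPair h]
  constructor
  · intro hG
    refine ⟨?_, fun Sp Sn h hc => ?_, fun Sp Sn Tp Tn hS hT => ?_, fun Sp Sn h => ?_⟩
    · rw [hg (disjoint_empty_left ∅), ofPair_empty_empty]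
      exact hG.map_zero
    · rw [hg h]
      exact hG.abs_le_one_of_size_eq_one _ (by rw [size_ofPair h, hc])
    · have := hG.meet_add_join_le (ofPair Sp Sn) (ofPair Tp Tn)
      rwa [meet_ofPair_ofPair hS hT, join_ofPair_ofPair hS hT, ← hg, ← hg, ← hg hS, ← hg hT] at this
      · exact disjoint_sdiff_sdiff
      · exact hS.mono inter_subset_left inter_subset_left
    · have := hG.modEq_size (ofPair Sp Sn)
      rwa [size_ofPair h, ← hg h, Nat.cast_add] at this
  · rintro ⟨h0, h1, h2, h3⟩
    refine ⟨?_, fun s hs => ?_, fun s t => ?_, fun s => ?_⟩ <;>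
      try obtain ⟨Sp, Sn, hS, rfl⟩ := exists_ofPair s
    · rw [← ofPair_empty_empty, ← hg (disjoint_empty_left ∅)]
      exact h0
    · rw [← hg hS]
      exact h1 Sp Sn hS (by rwa [size_ofPair hS] at hs)
    · obtain ⟨Tp, Tn, hT, rfl⟩ := exists_ofPair t
      rw [meet_ofPair_ofPair hS hT, join_ofPair_ofPair hS hT, ← hg hS, ← hg hT,
        ← hg (hS.mono inter_subset_left inter_subset_left), ← hg disjoint_sdiff_sdiff]
      exact h2 Sp Sn Tp Tn hS hT
    · rw [← hg hS, size_ofPair hS, Nat.cast_add]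
      exact h3 Sp Sn hS

theorem forall_eq_gFam_iff {n : ℕ} (g : Finset (Fin n) → Finset (Fin n) → ℤ)
    (𝓕 : Finset (Finset (Fin n))) (h : 𝓕.Nonempty) :
    (∀ Sp Sn : Finset (Fin n), Disjoint Sp Sn → g Sp Sn = gFam 𝓕 Sp Sn) ↔
      ∀ s, g (pos s) (neg s) = familyRank 𝓕 h s := by
  have hgFam : ∀ {Sp Sn : Finset (Fin n)}, Disjoint Sp Sn →
      gFam 𝓕 Sp Sn = familyRank 𝓕 h (ofPair Sp Sn) := fun hS => by
    rw [gFam, dif_pos h]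
    exact sup'_congr h rfl fun F _ => (pairing_ofPair_signOf hS F).symm
  constructor
  · intro hg s
    obtain ⟨Sp, Sn, hS, rfl⟩ := exists_ofPair s
    rw [pos_ofPair hS, neg_ofPair hS, hg Sp Sn hS, hgFam hS]
  · intro hg Sp Sn hS
    rw [hgFam hS, ← hg, pos_ofPair hS, neg_ofPair hS]

/-- **Theorem (rank axioms for delta-matroids).** A function `g` on admissible sets on `[n]` is
the rank function of a delta-matroid if and only if it is normalized, bounded on singletons,
bisubmodular, and satisfies the parity condition. -/
theorem deltaMatroid_rank_characterization (n : ℕ)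
    (g : Finset (Fin n) → Finset (Fin n) → ℤ) :
    (∃ D : DeltaMatroid n, ∀ Sp Sn : Finset (Fin n), Disjoint Sp Sn → g Sp Sn = D.g Sp Sn) ↔
      (g ∅ ∅ = 0 ∧
        (∀ Sp Sn : Finset (Fin n), Disjoint Sp Sn → Sp.card + Sn.card = 1 → |g Sp Sn| ≤ 1) ∧
        (∀ Sp Sn Tp Tn : Finset (Fin n), Disjoint Sp Sn → Disjoint Tp Tn →
          g (Sp ∩ Tp) (Sn ∩ Tn) + g ((Sp ∪ Tp) \ (Sn ∪ Tn)) ((Sn ∪ Tn) \ (Sp ∪ Tp))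
            ≤ g Sp Sn + g Tp Tn) ∧
        (∀ Sp Sn : Finset (Fin n), Disjoint Sp Sn →
          g Sp Sn ≡ ((Sp.card : ℤ) + (Sn.card : ℤ)) [ZMOD 2])) := by
  rw [← isDeltaRank_comp_pos_neg_iff]
  constructor
  · rintro ⟨D, hD⟩
    rw [funext ((forall_eq_gFam_iff g D.feas D.nonempty).1 hD)]
    exact SymmetricExchange.isDeltaRank_familyRank D.exchange D.nonempty
  · intro hG
    refine ⟨⟨feasibleSets _, hG.feasibleSets_nonempty, hG.symmetricExchange_feasibleSets⟩, ?_⟩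
    exact (forall_eq_gFam_iff g _ hG.feasibleSets_nonempty).2 fun s =>
      (hG.familyRank_feasibleSets _ s).symm
end

section
/- A delta-matroid D on [n] is even, i.e., all feasible sets F ∈ 𝓕 have |F| of the same parity, if and only if 2·g_D(S) = g_D((S⁺∪{i}, S⁻)) + g_D((S⁺, S⁻∪{i})) for every admissible set S on [n] with |S| = n−1, where i is the unique element of [n] not in S⁺∪S⁻. -/
/-!
Write `g(S) = max_F (|S| − 2 d(S, F))`, where `d(S, F) = |S⁺ \ F| + |S⁻ ∩ F|` counts the
disagreements of `S` with `(F, [n] \ F)`. Adding `i` to `S⁺` or to `S⁻` changes each term by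
`±1` according to whether `i ∈ F`, so `2 g(S) ≤ g(S ∪ i) + g(S ∪ ī) ≤ 2 g(S) + 2`, and equality
on the right needs maximizers `F₁ ∋ i` and `F₂ ∌ i` of the same value. When `|S| = n − 1`,
`d(S, F) ≡ |S⁺| + |F| + [i ∈ F] (mod 2)`, so in an even delta-matroid this cannot happen.

Conversely, if `D` is not even, symmetric exchange applied to a closest pair of feasible sets of
different parity produces feasible sets `F` and `F ∪ {i}`. At `S = (F, [n] \ (F ∪ {i}))` one
has `g(S) ≤ n − 1` while `g(S ∪ i) = g(S ∪ ī) = n`.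
-/

open Finset
open scoped symmDiff

section

variable {α : Type*} [DecidableEq α]

def signedAgreement (Sp Sn F : Finset α) : ℤ :=
  (#(Sp ∩ F) : ℤ) + #(Sn \ F) - #(Sn ∩ F) - #(Sp \ F)

theorem signedAgreement_eq (Sp Sn F : Finset α) :
    signedAgreement Sp Sn F = #Sp + #Sn - 2 * (#(Sp \ F) + #(Sn ∩ F) : ℤ) := by
  have hp := card_inter_add_card_sdiff Sp F
  have hn := card_inter_add_card_sdiff Sn F
  rw [signedAgreement]
  omega

theorem signedAgreement_le (Sp Sn F : Finset α) : signedAgreement Sp Sn F ≤ #Sp + #Sn := by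
  rw [signedAgreement_eq]
  omega

theorem signedAgreement_of_subset_of_disjoint {Sp Sn F : Finset α} (hp : Sp ⊆ F)
    (hn : Disjoint Sn F) : signedAgreement Sp Sn F = #Sp + #Sn := by
  rw [signedAgreement_eq, sdiff_eq_empty_iff_subset.2 hp, disjoint_iff_inter_eq_empty.1 hn]
  simp

theorem signedAgreement_insert_left {Sp Sn F : Finset α} {i : α} (hi : i ∉ Sp) :
    signedAgreement (insert i Sp) Sn F = signedAgreement Sp Sn F + if i ∈ F then 1 else -1 := by
  by_cases hiF : i ∈ F
  · rw [signedAgreement, signedAgreement, insert_inter_of_mem hiF, insert_sdiff_of_mem _ hiF,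
      card_insert_of_notMem (fun h => hi (mem_inter.1 h).1), if_pos hiF]
    push_cast
    ring
  · rw [signedAgreement, signedAgreement, insert_inter_of_notMem hiF,
      insert_sdiff_of_notMem _ hiF, card_insert_of_notMem (fun h => hi (mem_sdiff.1 h).1),
      if_neg hiF]
    push_cast
    ring

theorem signedAgreement_insert_right {Sp Sn F : Finset α} {i : α} (hi : i ∉ Sn) :
    signedAgreement Sp (insert i Sn) F = signedAgreement Sp Sn F - if i ∈ F then 1 else -1 := by
  by_cases hiF : i ∈ F
  · rw [signedAgreement, signedAgreement, insert_inter_of_mem hiF, insert_sdiff_of_mem _ hiF,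
      card_insert_of_notMem (fun h => hi (mem_inter.1 h).1), if_pos hiF]
    push_cast
    ring
  · rw [signedAgreement, signedAgreement, insert_inter_of_notMem hiF,
      insert_sdiff_of_notMem _ hiF, card_insert_of_notMem (fun h => hi (mem_sdiff.1 h).1),
      if_neg hiF]
    push_cast
    ring

theorem signedAgreement_insert_add_insert {Sp Sn F : Finset α} {i : α} (hp : i ∉ Sp)
    (hn : i ∉ Sn) : signedAgreement (insert i Sp) Sn F + signedAgreement Sp (insert i Sn) F =
      2 * signedAgreement Sp Sn F := by
  rw [signedAgreement_insert_left hp, signedAgreement_insert_right hn]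
  ring

theorem card_eq_card_inter_add_card_inter {Sp Sn F : Finset α} {i : α} (hdisj : Disjoint Sp Sn)
    (hp : i ∉ Sp) (hn : i ∉ Sn) (hF : F ⊆ insert i (Sp ∪ Sn)) :
    #F = #(Sp ∩ F) + #(Sn ∩ F) + if i ∈ F then 1 else 0 := by
  have hsplit : Sp ∩ F ∪ Sn ∩ F = F.erase i := by
    ext a
    have := @hF a
    grind
  have hdisj' : Disjoint (Sp ∩ F) (Sn ∩ F) := hdisj.mono inter_subset_left inter_subset_left
  rw [← card_union_of_disjoint hdisj', hsplit]
  split_ifs with hiF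
  · exact (card_erase_add_one hiF).symm
  · rw [erase_eq_of_notMem hiF, add_zero]

theorem signedAgreement_add_le_of_card_mod_two_eq {Sp Sn F₁ F₂ : Finset α} {i : α} {g : ℤ}
    (hdisj : Disjoint Sp Sn) (hp : i ∉ Sp) (hn : i ∉ Sn) (hF₁ : F₁ ⊆ insert i (Sp ∪ Sn))
    (hF₂ : F₂ ⊆ insert i (Sp ∪ Sn)) (hi₁ : i ∈ F₁) (hi₂ : i ∉ F₂) (hpar : #F₁ % 2 = #F₂ % 2)
    (h₁ : signedAgreement Sp Sn F₁ ≤ g) (h₂ : signedAgreement Sp Sn F₂ ≤ g) :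
    signedAgreement Sp Sn F₁ + signedAgreement Sp Sn F₂ + 2 ≤ 2 * g := by
  have c₁ := card_eq_card_inter_add_card_inter hdisj hp hn hF₁
  have c₂ := card_eq_card_inter_add_card_inter hdisj hp hn hF₂
  have d₁ := card_inter_add_card_sdiff Sp F₁
  have d₂ := card_inter_add_card_sdiff Sp F₂
  rw [if_pos hi₁] at c₁
  rw [if_neg hi₂] at c₂
  rw [signedAgreement_eq] at h₁ h₂ ⊢
  rw [signedAgreement_eq]
  omega

theorem card_symmDiff_add_two_mul_card_inter (s t : Finset α) :
    #(s ∆ t) + 2 * #(s ∩ t) = #s + #t := by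
  rw [symmDiff_eq_sup_sdiff_inf, ← card_union_add_card_inter s t, sup_eq_union, inf_eq_inter,
    card_sdiff_of_subset inter_subset_union]
  have := card_le_card (inter_subset_union (s := s) (t := t))
  omega

theorem exists_insert_mem_of_symmDiff_singleton_mem
    {G : Finset (Finset α)} {F : Finset α} {x : α} (hF : F ∈ G) (hFx : F ∆ {x} ∈ G) :
    ∃ F' ∈ G, ∃ i ∉ F', insert i F' ∈ G := by
  by_cases hx : x ∈ F
  · rw [symmDiff_of_ge (singleton_subset_iff.2 hx), sdiff_singleton_eq_erase] at hFx
    exact ⟨F.erase x, hFx, x, notMem_erase x F, by rwa [insert_erase hx]⟩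
  · rw [symmDiff_eq_union (disjoint_singleton_right.2 hx), union_singleton] at hFx
    exact ⟨F, hF, x, hx, hFx⟩

end

section gFam

variable {n : ℕ} {G : Finset (Finset (Fin n))}

theorem gFam_eq_sup' (hG : G.Nonempty) (Sp Sn : Finset (Fin n)) :
    gFam G Sp Sn = G.sup' hG (signedAgreement Sp Sn) :=
  dif_pos hG

theorem signedAgreement_le_gFam {F : Finset (Fin n)} (hF : F ∈ G) (Sp Sn : Finset (Fin n)) :
    signedAgreement Sp Sn F ≤ gFam G Sp Sn := by
  rw [gFam_eq_sup' ⟨F, hF⟩]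
  exact le_sup' _ hF

variable (G) in
theorem gFam_le (Sp Sn : Finset (Fin n)) :
    gFam G Sp Sn ≤ #Sp + #Sn := by
  rw [gFam]
  split_ifs with hG
  · exact sup'_le hG _ fun F _ => signedAgreement_le Sp Sn F
  · positivity

theorem exists_mem_signedAgreement_eq_gFam (hG : G.Nonempty) (Sp Sn : Finset (Fin n)) :
    ∃ F ∈ G, signedAgreement Sp Sn F = gFam G Sp Sn := by
  obtain ⟨F, hF, hmax⟩ := exists_mem_eq_sup' hG (signedAgreement Sp Sn)
  exact ⟨F, hF, by rw [gFam_eq_sup' hG, hmax]⟩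

theorem two_mul_gFam_le (hG : G.Nonempty) {Sp Sn : Finset (Fin n)} {i : Fin n} (hp : i ∉ Sp)
    (hn : i ∉ Sn) : 2 * gFam G Sp Sn ≤ gFam G (insert i Sp) Sn + gFam G Sp (insert i Sn) := by
  obtain ⟨F, hF, hmax⟩ := exists_mem_signedAgreement_eq_gFam hG Sp Sn
  have h₁ := signedAgreement_le_gFam hF (insert i Sp) Sn
  have h₂ := signedAgreement_le_gFam hF Sp (insert i Sn)
  have := signedAgreement_insert_add_insert (F := F) hp hn
  linarith

theorem gFam_insert_add_le (hG : G.Nonempty) (hpar : ∀ F₁ ∈ G, ∀ F₂ ∈ G, #F₁ % 2 = #F₂ % 2)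
    {Sp Sn : Finset (Fin n)} {i : Fin n} (hdisj : Disjoint Sp Sn) (hp : i ∉ Sp) (hn : i ∉ Sn)
    (hcover : insert i (Sp ∪ Sn) = univ) :
    gFam G (insert i Sp) Sn + gFam G Sp (insert i Sn) ≤ 2 * gFam G Sp Sn := by
  obtain ⟨F₁, hF₁, hmax₁⟩ := exists_mem_signedAgreement_eq_gFam hG (insert i Sp) Sn
  obtain ⟨F₂, hF₂, hmax₂⟩ := exists_mem_signedAgreement_eq_gFam hG Sp (insert i Sn)
  have h₁ := signedAgreement_le_gFam hF₁ Sp Sn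
  have h₂ := signedAgreement_le_gFam hF₂ Sp Sn
  rw [← hmax₁, ← hmax₂, signedAgreement_insert_left hp, signedAgreement_insert_right hn]
  by_cases hi₁ : i ∈ F₁ <;> by_cases hi₂ : i ∈ F₂ <;> simp only [hi₁, hi₂, ↓reduceIte]
  · linarith
  · have := signedAgreement_add_le_of_card_mod_two_eq hdisj hp hn (hcover ▸ subset_univ F₁)
      (hcover ▸ subset_univ F₂) hi₁ hi₂ (hpar F₁ hF₁ F₂ hF₂) h₁ h₂
    linarith
  · linarith
  · linarith

theorem two_mul_gFam_lt_of_insert_mem {F : Finset (Fin n)} {i : Fin n} (hF : F ∈ G) (hi : i ∉ F)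
    (hiF : insert i F ∈ G) :
    2 * gFam G F (insert i F)ᶜ <
      gFam G (insert i F) (insert i F)ᶜ + gFam G F (insert i (insert i F)ᶜ) := by
  have hcompl : insert i (insert i F)ᶜ = Fᶜ := by
    ext a
    by_cases ha : a = i <;> simp [ha, hi]
  have hcard : #F + 1 + #(insert i F)ᶜ = n := by
    rw [← card_insert_of_notMem hi, card_add_card_compl, Fintype.card_fin]
  have hcardF : #F + #Fᶜ = n := by
    rw [card_add_card_compl, Fintype.card_fin]
  have hS := gFam_le G F (insert i F)ᶜ
  have hSp := signedAgreement_le_gFam hiF (insert i F) (insert i F)ᶜ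
  have hSn := signedAgreement_le_gFam hF F (insert i (insert i F)ᶜ)
  rw [signedAgreement_of_subset_of_disjoint subset_rfl disjoint_compl_left,
    card_insert_of_notMem hi] at hSp
  rw [hcompl, signedAgreement_of_subset_of_disjoint subset_rfl disjoint_compl_left] at hSn
  rw [hcompl]
  omega

end gFam

theorem DeltaMatroid.exists_insert_mem_of_card_mod_two_ne {n : ℕ} (D : DeltaMatroid n)
    {F₁ F₂ : Finset (Fin n)} (h₁ : F₁ ∈ D.feas) (h₂ : F₂ ∈ D.feas) (hpar : #F₁ % 2 ≠ #F₂ % 2) :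
    ∃ F ∈ D.feas, ∃ i ∉ F, insert i F ∈ D.feas := by
  induction hd : #(F₁ ∆ F₂) using Nat.strong_induction_on generalizing F₁ with
  | _ d ih =>
  obtain ⟨x, hx⟩ : (F₁ ∆ F₂).Nonempty := symmDiff_nonempty.2 (by rintro rfl; exact hpar rfl)
  obtain ⟨y, hy, hxy⟩ := D.exchange F₁ h₁ F₂ h₂ x hx
  obtain rfl | hne := eq_or_ne x y
  · exact exists_insert_mem_of_symmDiff_singleton_mem h₁ (by simpa using hxy)
  have hsub : {x, y} ⊆ F₁ ∆ F₂ := insert_subset hx (singleton_subset_iff.2 hy)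
  have hcloser : #(F₁ ∆ {x, y} ∆ F₂) = d - 2 := by
    rw [symmDiff_right_comm, symmDiff_of_ge hsub, card_sdiff_of_subset hsub, card_pair hne, hd]
  have hsame := card_symmDiff_add_two_mul_card_inter F₁ {x, y}
  have := card_le_card hsub
  rw [card_pair hne] at hsame this
  exact ih _ (by omega) hxy (by omega) hcloser

/-- **Theorem (evenness via the rank function).** A delta-matroid `D` on `[n]` is even (all
feasible sets have the same parity of cardinality) if and only if
`2 g_D(S) = g_D(S ∪ {i}) + g_D(S ∪ {ī})` for every admissible `S` of size `n − 1`, where `i`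
is the unique element of `[n]` missing from `S`. -/
theorem deltaMatroid_even_iff (n : ℕ) (D : DeltaMatroid n) :
    (∀ F₁ ∈ D.feas, ∀ F₂ ∈ D.feas, F₁.card % 2 = F₂.card % 2) ↔
      (∀ (Sp Sn : Finset (Fin n)) (i : Fin n), Disjoint Sp Sn → i ∉ Sp → i ∉ Sn →
        Sp.card + Sn.card = n - 1 →
        2 * D.g Sp Sn = D.g (insert i Sp) Sn + D.g Sp (insert i Sn)) := by
  constructor
  · intro hpar Sp Sn i hdisj hp hn hcard
    have hcover : insert i (Sp ∪ Sn) = univ := by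
      refine eq_univ_of_card _ ?_
      rw [card_insert_of_notMem (by simp [hp, hn]), card_union_of_disjoint hdisj, hcard,
        Fintype.card_fin]
      have := i.pos
      omega
    exact le_antisymm (two_mul_gFam_le D.nonempty hp hn)
      (gFam_insert_add_le D.nonempty hpar hdisj hp hn hcover)
  · intro hid F₁ hF₁ F₂ hF₂
    by_contra hpar
    obtain ⟨F, hF, i, hi, hiF⟩ := D.exists_insert_mem_of_card_mod_two_ne hF₁ hF₂ hpar
    have hcard : #F + #(insert i F)ᶜ = n - 1 := by
      have := card_add_card_compl (insert i F)
      rw [card_insert_of_notMem hi, Fintype.card_fin] at this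
      omega
    exact (two_mul_gFam_lt_of_insert_mem hF hi hiF).ne
      (hid F _ i (disjoint_compl_right.mono_left (subset_insert i F)) hi (by simp) hcard)
end

section
/- Let D be a delta-matroid on [n] and let S ⊆ T be admissible sets on [n] (meaning S⁺ ⊆ T⁺ and S⁻ ⊆ T⁻). Let m_S = max_{F∈𝓕} (|S⁺∩F| + |S⁻∖F|) and let 𝓕_S = {F ∈ 𝓕 : |S⁺∩F| + |S⁻∖F| = m_S} be the set of feasible sets achieving this maximum. Then max_{F∈𝓕_S} (|T⁺∩F| + |T⁻∖F|) = max_{F∈𝓕} (|T⁺∩F| + |T⁻∖F|). -/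
open Finset
open scoped symmDiff

/-!
Write `S(F) = |S⁺ ∩ F| + |S⁻ \ F|` (this is `agreement`). Fix a feasible `G` maximizing `S(·)`,
and among the feasible sets maximizing `T(·)` take `F` with `|F ∆ G|` minimal. If
`S(F) < S(G)`, flipping some `x ∈ F ∆ G` raises `S(F)`, hence also `T(F)` since `S ⊆ T`.
The exchange partner `y ∈ F ∆ G` of `x` cannot be `x` itself by maximality of `F`, and flipping
`y` lowers `T(·)` by at most one, so `F ∆ {x, y}` is again `T`-maximal and closer to `G`.
-/

section Agreement

variable {α : Type*} [DecidableEq α]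

def agreement (A B F : Finset α) : ℕ := #(A ∩ F) + #(B \ F)

theorem agreement_le_agreement_symmDiff_singleton_add_one (A B F : Finset α) (z : α) :
    agreement A B F ≤ agreement A B (F ∆ {z}) + 1 := by
  unfold agreement
  by_cases hz : z ∈ F
  · have hA : A ∩ F ⊆ insert z (A ∩ (F ∆ {z})) := by
      intro a; simp only [mem_inter, mem_insert, mem_symmDiff, mem_singleton]; tauto
    have hB : B \ F ⊆ B \ (F ∆ {z}) := by
      intro a; simp only [mem_sdiff, mem_symmDiff, mem_singleton]; grind
    grw [card_le_card hA, card_le_card hB, card_insert_le]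
    omega
  · have hA : A ∩ F ⊆ A ∩ (F ∆ {z}) := by
      intro a; simp only [mem_inter, mem_symmDiff, mem_singleton]; grind
    have hB : B \ F ⊆ insert z (B \ (F ∆ {z})) := by
      intro a; simp only [mem_sdiff, mem_insert, mem_symmDiff, mem_singleton]; tauto
    grw [card_le_card hA, card_le_card hB, card_insert_le]
    omega

theorem agreement_symmDiff_singleton {A B F : Finset α} {z : α} (hAB : Disjoint A B)
    (hz : z ∈ (A \ F) ∪ (B ∩ F)) :
    agreement A B (F ∆ {z}) = agreement A B F + 1 := by
  unfold agreement
  rcases mem_union.1 hz with hz | hz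
  · have hzB : z ∉ B := disjoint_left.1 hAB (mem_sdiff.1 hz).1
    have hA : A ∩ (F ∆ {z}) = insert z (A ∩ F) := by
      ext a; simp only [mem_inter, mem_insert, mem_symmDiff, mem_singleton, mem_sdiff] at *; grind
    have hB : B \ (F ∆ {z}) = B \ F := by
      ext a; simp only [mem_sdiff, mem_symmDiff, mem_singleton]; grind
    rw [hA, hB, card_insert_of_notMem (by simp [(mem_sdiff.1 hz).2])]
    omega
  · have hzA : z ∉ A := disjoint_right.1 hAB (mem_inter.1 hz).1
    have hA : A ∩ (F ∆ {z}) = A ∩ F := by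
      ext a; simp only [mem_inter, mem_symmDiff, mem_singleton]; grind
    have hB : B \ (F ∆ {z}) = insert z (B \ F) := by
      ext a; simp only [mem_inter, mem_insert, mem_symmDiff, mem_singleton, mem_sdiff] at *; grind
    rw [hA, hB, card_insert_of_notMem (by simp [(mem_inter.1 hz).2])]
    omega

theorem exists_mem_symmDiff_of_agreement_lt {A B F G : Finset α}
    (h : agreement A B F < agreement A B G) : ∃ z ∈ F ∆ G, z ∈ (A \ F) ∪ (B ∩ F) := by
  by_contra! hno
  have hA : A ∩ G ⊆ A ∩ F := by
    intro a; have := hno a; simp only [mem_inter, mem_union, mem_sdiff, mem_symmDiff] at *; tauto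
  have hB : B \ G ⊆ B \ F := by
    intro a; have := hno a; simp only [mem_inter, mem_union, mem_sdiff, mem_symmDiff] at *; tauto
  exact h.not_ge (add_le_add (card_le_card hA) (card_le_card hB))

theorem symmDiff_pair_eq {F : Finset α} {x y : α} (hxy : x ≠ y) :
    F ∆ {x, y} = F ∆ {x} ∆ {y} := by
  ext a; simp only [mem_symmDiff, mem_insert, mem_singleton]; grind

theorem card_symmDiff_pair_symmDiff_lt {F G : Finset α} {x y : α} (hx : x ∈ F ∆ G)
    (hy : y ∈ F ∆ G) : #(F ∆ {x, y} ∆ G) < #(F ∆ G) := by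
  have hsub : {x, y} ⊆ F ∆ G := insert_subset hx (singleton_subset_iff.2 hy)
  rw [symmDiff_right_comm, symmDiff_of_ge hsub]
  exact card_lt_card (sdiff_ssubset hsub (insert_nonempty _ _))

end Agreement

namespace DeltaMatroid

variable {n : ℕ} (D : DeltaMatroid n) {Sp Sn Tp Tn : Finset (Fin n)}

theorem exists_isMaxOn_agreement_symmDiff_lt (hT : Disjoint Tp Tn) (hSp : Sp ⊆ Tp)
    (hSn : Sn ⊆ Tn) {F G : Finset (Fin n)} (hF : F ∈ D.feas) (hG : G ∈ D.feas)
    (hFmax : IsMaxOn (agreement Tp Tn) D.feas F) (hlt : agreement Sp Sn F < agreement Sp Sn G) :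
    ∃ F' ∈ D.feas, IsMaxOn (agreement Tp Tn) D.feas F' ∧ #(F' ∆ G) < #(F ∆ G) := by
  rw [isMaxOn_iff] at hFmax
  obtain ⟨x, hxFG, hxS⟩ := exists_mem_symmDiff_of_agreement_lt hlt
  have hxT : x ∈ (Tp \ F) ∪ (Tn ∩ F) :=
    union_subset_union (sdiff_subset_sdiff hSp le_rfl) (inter_subset_inter_right hSn) hxS
  have hup := agreement_symmDiff_singleton hT hxT
  obtain ⟨y, hyFG, hF'⟩ := D.exchange F hF G hG x hxFG
  have hxy : x ≠ y := by
    rintro rfl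
    have := hFmax _ (by simpa using hF')
    omega
  refine ⟨F ∆ {x, y}, hF', isMaxOn_iff.2 fun F'' hF'' => ?_,
    card_symmDiff_pair_symmDiff_lt hxFG hyFG⟩
  have hdown := agreement_le_agreement_symmDiff_singleton_add_one Tp Tn (F ∆ {x}) y
  rw [← symmDiff_pair_eq hxy] at hdown
  have := hFmax F'' hF''
  omega

theorem exists_isMaxOn_agreement_of_subset (hT : Disjoint Tp Tn) (hSp : Sp ⊆ Tp)
    (hSn : Sn ⊆ Tn) :
    ∃ F ∈ D.feas, IsMaxOn (agreement Sp Sn) D.feas F ∧ IsMaxOn (agreement Tp Tn) D.feas F := by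
  classical
  obtain ⟨G, hG, hGmax⟩ := D.feas.exists_max_image (agreement Sp Sn) D.nonempty
  obtain ⟨F₀, hF₀, hF₀max⟩ := D.feas.exists_max_image (agreement Tp Tn) D.nonempty
  obtain ⟨F, hF, hFmin⟩ := (D.feas.filter (IsMaxOn (agreement Tp Tn) D.feas)).exists_min_image
    (fun F => #(F ∆ G)) ⟨F₀, mem_filter.2 ⟨hF₀, isMaxOn_iff.2 hF₀max⟩⟩
  obtain ⟨hF, hFmax⟩ := mem_filter.1 hF
  have hGF : agreement Sp Sn G ≤ agreement Sp Sn F := by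
    by_contra! hlt
    obtain ⟨F', hF', hF'max, hcloser⟩ :=
      D.exists_isMaxOn_agreement_symmDiff_lt hT hSp hSn hF hG hFmax hlt
    exact (hFmin F' (mem_filter.2 ⟨hF', hF'max⟩)).not_gt hcloser
  exact ⟨F, hF, isMaxOn_iff.2 fun F' hF' => (hGmax F' hF').trans hGF, hFmax⟩

end DeltaMatroid

/-- **Theorem (greedy property).** Let `S ⊆ T` be admissible sets on `[n]`. Among the feasible
sets maximizing `|S⁺ ∩ F| + |S⁻ \ F|`, the maximum of `|T⁺ ∩ F| + |T⁻ \ F|` is the same as the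
maximum over all feasible sets. -/
theorem deltaMatroid_greedy (n : ℕ) (D : DeltaMatroid n) (Sp Sn Tp Tn : Finset (Fin n))
    (hT : Disjoint Tp Tn) (hSp : Sp ⊆ Tp) (hSn : Sn ⊆ Tn) :
    ((D.feas.filter fun F => (Sp ∩ F).card + (Sn \ F).card
          = D.feas.sup fun F => (Sp ∩ F).card + (Sn \ F).card).sup
        fun F => (Tp ∩ F).card + (Tn \ F).card)
      = D.feas.sup fun F => (Tp ∩ F).card + (Tn \ F).card := by
  obtain ⟨F, hF, hSmax, hTmax⟩ := D.exists_isMaxOn_agreement_of_subset hT hSp hSn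
  have hTsup : D.feas.sup (agreement Tp Tn) = agreement Tp Tn F := sup_eq_of_isMaxOn hF hTmax
  have hSsup : D.feas.sup (agreement Sp Sn) = agreement Sp Sn F := sup_eq_of_isMaxOn hF hSmax
  refine le_antisymm (sup_mono (filter_subset _ _)) ?_
  exact hTsup.trans_le (le_sup (f := agreement Tp Tn) (mem_filter.2 ⟨hF, hSsup.symm⟩))
end

section
/- Let D be a delta-matroid on [n] and let (P, N) be a partition of [n] into two disjoint sets (encoding a size-n admissible set S). Let r = max_{F∈𝓕}(|P∩F| + |N∖F|) and let ℬ = {(P∩F) ∪ (N∖F) : F ∈ 𝓕, |P∩F| + |N∖F| = r}. Then ℬ is the set of bases of a matroid M on [n], and its rank function satisfies rk_M(T) = (g_D((T∩P, T∩N)) + |T|)/2 for every T ⊆ [n]. -/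
/-!
Twisting by `N`, `F ↦ F ∆ N`, turns `(P ∩ F) ∪ (N \ F)` into `F ∆ N` and preserves symmetric
exchange, so `ℬ` is the family of maximum-cardinality members of a delta-matroid. For such a
member `B`, a feasible `F` and `x ∈ F \ B`, exchange yields `y ∈ B \ F` with `B - y + x` again
of maximum size. Iterating this shows that every feasible set lies inside a member of `ℬ`, so
`max_{B ∈ ℬ} |T ∩ B|` is the maximum over all twisted feasible sets, and the rank formula is the
identity `|T ∩ P ∩ F| + |T ∩ N \ F| - |T ∩ N ∩ F| - |T ∩ P \ F| = 2 |T ∩ (F ∆ N)| - |T|`.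
-/

open Finset
open scoped symmDiff

variable {α : Type*}

def maxCardSets (G : Finset (Finset α)) : Finset (Finset α) :=
  G.filter (·.card = G.sup card)

theorem maxCardSets_nonempty {G : Finset (Finset α)} (hne : G.Nonempty) :
    (maxCardSets G).Nonempty := by
  obtain ⟨B, hB, hBeq⟩ := exists_mem_eq_sup G hne card
  exact ⟨B, mem_filter.2 ⟨hB, hBeq.symm⟩⟩

variable [DecidableEq α]

def IsDeltaFamily (G : Finset (Finset α)) : Prop :=
  ∀ F₁ ∈ G, ∀ F₂ ∈ G, ∀ x ∈ F₁ ∆ F₂, ∃ y ∈ F₁ ∆ F₂, F₁ ∆ {x, y} ∈ G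

namespace IsDeltaFamily

variable {G : Finset (Finset α)}

theorem image_symmDiff (hG : IsDeltaFamily G) (S : Finset α) :
    IsDeltaFamily (G.image (· ∆ S)) := by
  simp only [IsDeltaFamily, forall_mem_image]
  intro F₁ hF₁ F₂ hF₂ x hx
  have hcancel : F₁ ∆ S ∆ (F₂ ∆ S) = F₁ ∆ F₂ := by
    rw [symmDiff_symmDiff_symmDiff_comm, symmDiff_self, symmDiff_bot]
  rw [hcancel] at hx ⊢
  obtain ⟨y, hy, hmem⟩ := hG F₁ hF₁ F₂ hF₂ x hx
  exact ⟨y, hy, mem_image.2 ⟨_, hmem, symmDiff_right_comm _ _ _⟩⟩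

theorem exists_insert_erase_mem_maxCardSets (hG : IsDeltaFamily G) {B F : Finset α}
    (hB : B ∈ maxCardSets G) (hF : F ∈ G) {x : α} (hx : x ∈ F \ B) :
    ∃ y ∈ B \ F, insert x (B.erase y) ∈ maxCardSets G := by
  obtain ⟨hBG, hBmax⟩ := mem_filter.1 hB
  obtain ⟨hxF, hxB⟩ := mem_sdiff.1 hx
  obtain ⟨y, hy, hmem⟩ := hG B hBG F hF x (mem_symmDiff.2 (Or.inr ⟨hxF, hxB⟩))
  by_cases hyB : y ∈ B
  · have hyF : y ∉ F := by simp_all [mem_symmDiff]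
    have hswap : B ∆ {x, y} = insert x (B.erase y) := by
      ext z
      simp only [mem_insert, mem_erase, mem_symmDiff, mem_singleton]
      grind
    refine ⟨y, mem_sdiff.2 ⟨hyB, hyF⟩, mem_filter.2 ⟨hswap ▸ hmem, ?_⟩⟩
    rw [card_insert_of_notMem (by simp [hxB]), card_erase_add_one hyB, hBmax]
  · -- otherwise `B ∆ {x, y}` would be a strictly larger feasible set
    have hlt : B.card < (B ∆ {x, y}).card := by
      refine card_lt_card ((ssubset_iff_of_subset fun z hz => ?_).2 ⟨x, ?_, hxB⟩) <;>
        simp only [mem_symmDiff, mem_insert, mem_singleton] <;> grind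
    exact absurd (le_sup (f := card) hmem) (by omega)

theorem exists_maxCardSets_superset (hG : IsDeltaFamily G) {H : Finset α} (hH : H ∈ G) :
    ∃ B ∈ maxCardSets G, H ⊆ B := by
  obtain ⟨B, hB, hBmin⟩ :=
    exists_min_image _ (fun B => (H \ B).card) (maxCardSets_nonempty ⟨H, hH⟩)
  refine ⟨B, hB, fun x hxH => ?_⟩
  by_contra hxB
  obtain ⟨y, hy, hmem⟩ := hG.exists_insert_erase_mem_maxCardSets hB hH (mem_sdiff.2 ⟨hxH, hxB⟩)
  -- the exchange moves `x` into `B` and only removes an element outside `H`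
  have hlt : (H \ insert x (B.erase y)).card < (H \ B).card := by
    refine card_lt_card ((ssubset_iff_of_subset fun z hz => ?_).2 ⟨x, ?_, ?_⟩) <;>
      simp only [mem_sdiff, mem_insert, mem_erase] at hy ⊢ <;> grind
  exact absurd (hBmin _ hmem) (not_le.2 hlt)

theorem sup_inter_card_maxCardSets (hG : IsDeltaFamily G) (T : Finset α) :
    (maxCardSets G).sup (fun B => (T ∩ B).card) = G.sup fun B => (T ∩ B).card := by
  refine le_antisymm (sup_mono (filter_subset _ _)) (Finset.sup_le fun H hH => ?_)
  obtain ⟨B, hB, hHB⟩ := hG.exists_maxCardSets_superset hH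
  exact (card_le_card (inter_subset_inter_left hHB)).trans (le_sup (f := fun B => (T ∩ B).card) hB)

theorem exchangeProperty_compl_maxCardSets [Fintype α] (hG : IsDeltaFamily G) :
    Matroid.ExchangeProperty fun X : Set α => ∃ B ∈ maxCardSets G, X = (↑B)ᶜ := by
  rintro _ _ ⟨B₁, hB₁, rfl⟩ ⟨B₂, hB₂, rfl⟩ a ⟨haB₁, haB₂⟩
  obtain ⟨y, hy, hmem⟩ := hG.exists_insert_erase_mem_maxCardSets hB₁ (mem_filter.1 hB₂).1
    (mem_sdiff.2 ⟨not_not.1 haB₂, haB₁⟩)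
  obtain ⟨hyB₁, hyB₂⟩ := mem_sdiff.1 hy
  refine ⟨y, ⟨hyB₂, not_not.2 hyB₁⟩, _, hmem, ?_⟩
  ext z
  simp only [Set.mem_insert_iff, Set.mem_sdiff, Set.mem_compl_iff, mem_coe,
    Set.mem_singleton_iff, mem_insert, mem_erase]
  grind

end IsDeltaFamily

section UpperMatroid

variable [Fintype α] {G : Finset (Finset α)}

/-- Maximum-cardinality sets of a delta-family only satisfy the exchange axiom with the roles
of the two bases swapped, so the matroid is built as the dual of the one whose bases are their
complements. -/
def upperMatroid (hG : IsDeltaFamily G) (hne : G.Nonempty) : Matroid α :=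
  (Matroid.ofIsBaseOfFinite Set.finite_univ (fun X => ∃ B ∈ maxCardSets G, X = (↑B)ᶜ)
    (let ⟨B, hB⟩ := maxCardSets_nonempty hne; ⟨_, B, hB, rfl⟩)
    hG.exchangeProperty_compl_maxCardSets fun _ _ => Set.subset_univ _)✶

variable (hG : IsDeltaFamily G) (hne : G.Nonempty)

theorem upperMatroid_ground : (upperMatroid hG hne).E = Set.univ := rfl

theorem upperMatroid_isBase_iff {B : Finset α} :
    (upperMatroid hG hne).IsBase ↑B ↔ B ∈ maxCardSets G := by
  rw [upperMatroid, Matroid.dual_isBase_iff (Set.subset_univ _)]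
  change (∃ C ∈ maxCardSets G, Set.univ \ (B : Set α) = (↑C)ᶜ) ↔ _
  simp only [← Set.compl_eq_univ_sdiff, compl_inj_iff, coe_inj, exists_eq_right']

end UpperMatroid

theorem gFam_eq_of_disjoint {n : ℕ} {G : Finset (Finset (Fin n))} (hne : G.Nonempty)
    {Sp Sn : Finset (Fin n)} (hS : Disjoint Sp Sn) :
    gFam G Sp Sn = 2 * ((G.sup fun F => (Sp ∩ F ∪ Sn \ F).card : ℕ) : ℤ) - (Sp.card + Sn.card) := by
  have hterm : ∀ F : Finset (Fin n), ((Sp ∩ F).card : ℤ) + ((Sn \ F).card : ℤ)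
      - ((Sn ∩ F).card : ℤ) - ((Sp \ F).card : ℤ)
      = 2 * ((Sp ∩ F ∪ Sn \ F).card : ℤ) - (Sp.card + Sn.card) := by
    intro F
    have hdisj : Disjoint (Sp ∩ F) (Sn \ F) :=
      hS.mono inter_subset_left sdiff_subset
    rw [card_union_of_disjoint hdisj, ← card_inter_add_card_sdiff Sp F,
      ← card_inter_add_card_sdiff Sn F]
    push_cast; ring
  rw [gFam, dif_pos hne, sup'_congr hne rfl fun F _ => hterm F, ← sup'_eq_sup hne,
    apply_sup'_eq_sup'_comp hne (fun k : ℕ => 2 * (k : ℤ) - (Sp.card + Sn.card))]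
  · rfl
  · intro x y; simp only [Nat.cast_max]; omega

/-- **Proposition (the upper matroid and its rank function).** Let `(P, N)` be a partition of
`[n]`, let `r = max_{F ∈ 𝓕} (|P ∩ F| + |N \ F|)`, and let
`ℬ = {(P ∩ F) ∪ (N \ F) : F ∈ 𝓕, |P ∩ F| + |N \ F| = r}`. Then `ℬ` is the set of bases of a
matroid `M` on `[n]` whose rank function (the maximum size of an intersection with a basis)
satisfies `rk_M(T) = (g_D((T∩P, T∩N)) + |T|)/2` for all `T ⊆ [n]`. -/
theorem deltaMatroid_upper_matroid_rank (n : ℕ) (D : DeltaMatroid n) (P N : Finset (Fin n))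
    (hPN : Disjoint P N) (hcover : P ∪ N = univ) :
    ∃ M : Matroid (Fin n), M.E = Set.univ ∧
      (∀ B : Finset (Fin n),
        M.IsBase ↑B ↔ B ∈ (D.feas.filter fun F => (P ∩ F).card + (N \ F).card
              = D.feas.sup fun F => (P ∩ F).card + (N \ F).card).image
            fun F => (P ∩ F) ∪ (N \ F)) ∧
      (∀ T : Finset (Fin n),
        2 * ((((D.feas.filter fun F => (P ∩ F).card + (N \ F).card
              = D.feas.sup fun F => (P ∩ F).card + (N \ F).card).image
              fun F => (P ∩ F) ∪ (N \ F)).sup fun B => (T ∩ B).card : ℕ) : ℤ)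
          = D.g (T ∩ P) (T ∩ N) + T.card) := by
  obtain rfl : Pᶜ = N := IsCompl.compl_eq ⟨hPN, codisjoint_iff.2 hcover⟩
  have htwist : ∀ T F : Finset (Fin n), T ∩ P ∩ F ∪ (T ∩ Pᶜ) \ F = T ∩ (F ∆ Pᶜ) := by
    intro T F; ext z; simp only [mem_union, mem_inter, mem_sdiff, mem_compl, mem_symmDiff]; tauto
  have hset : ∀ F : Finset (Fin n), P ∩ F ∪ Pᶜ \ F = F ∆ Pᶜ := fun F => by
    simpa using htwist univ F
  have hcard : ∀ F : Finset (Fin n), (P ∩ F).card + (Pᶜ \ F).card = (F ∆ Pᶜ).card := fun F => by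
    rw [← card_union_of_disjoint (hPN.mono inter_subset_left sdiff_subset), hset]
  set G := D.feas.image (· ∆ Pᶜ)
  have hG : IsDeltaFamily G := IsDeltaFamily.image_symmDiff D.exchange Pᶜ
  have hne : G.Nonempty := D.nonempty.image _
  have hℬ : ((D.feas.filter fun F => (P ∩ F).card + (Pᶜ \ F).card
      = D.feas.sup fun F => (P ∩ F).card + (Pᶜ \ F).card).image fun F => P ∩ F ∪ Pᶜ \ F)
      = maxCardSets G := by
    simp only [hcard, hset, maxCardSets, G, filter_image, sup_image]
    rfl
  refine ⟨upperMatroid hG hne, upperMatroid_ground hG hne,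
    fun B => by rw [hℬ, upperMatroid_isBase_iff], fun T => ?_⟩
  rw [hℬ, hG.sup_inter_card_maxCardSets, DeltaMatroid.g,
    gFam_eq_of_disjoint D.nonempty (hPN.mono inter_subset_right inter_subset_right), sup_image]
  have hT : (T ∩ P).card + (T ∩ Pᶜ).card = T.card := by
    rw [← sdiff_eq_inter_compl, card_inter_add_card_sdiff]
  simp only [htwist, Function.comp_def, ← hT]
  push_cast
  ring
end

section
/- Let D be a delta-matroid on [n]. A point x ∈ ℤ^n lies in the polytope ½·(P(D) + [−1,1]^n) (the image of the Minkowski sum of P(D) and the cube [−1,1]^n under scaling by ½) if and only if x = e_S for some admissible set S that is independent in D. In particular, S ↦ e_S is a bijection between the independent sets of D and the lattice points of ½·(P(D) + [−1,1]^n). -/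
open Finset
open scoped symmDiff

open scoped Pointwise

/-!
Write `2x = p + c` with `p ∈ P(D)` and `c ∈ [-1,1]^n`. Since `P(D)` also lies in the cube,
every coordinate of the lattice point `x` is `-1`, `0` or `1`, and `p_i = x_i` wherever `x_i ≠ 0`.
Hence the linear functional `y ↦ x ⬝ᵥ y` takes at `p` its largest value `x ⬝ᵥ x` on the cube;
by the maximum principle it does so at some vertex `e_F` of `P(D)`, which forces
`x_i = 1 → i ∈ F` and `x_i = -1 → i ∉ F`, i.e. `x = e_S` with `S` independent.
Conversely, if `S⁺ ⊆ F` and `S⁻ ∩ F = ∅` then `2 e_S - e_F ∈ [-1,1]^n`.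
-/

lemma exists_dotProduct_le_of_mem_convexHull {ι : Type*} [Fintype ι] {t : Set (ι → ℝ)}
    {p : ι → ℝ} (hp : p ∈ convexHull ℝ t) (a : ι → ℝ) : ∃ y ∈ t, a ⬝ᵥ p ≤ a ⬝ᵥ y :=
  ((dotProductBilin ℝ ℝ a).convexOn convex_univ).exists_ge_of_mem_convexHull
    (Set.subset_univ t) hp

section LatticeCoordinate

variable {k : ℤ} {p c : ℝ}

lemma abs_le_one_of_add_eq_two_mul (hp : p ∈ Set.Icc (-1 : ℝ) 1) (hc : c ∈ Set.Icc (-1 : ℝ) 1)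
    (h : p + c = 2 * k) : |k| ≤ 1 := by
  have : |(k : ℝ)| ≤ 1 := abs_le.2 ⟨by linarith [hp.1, hc.1], by linarith [hp.2, hc.2]⟩
  exact_mod_cast this

lemma mul_eq_mul_self_of_add_eq_two_mul (hp : p ∈ Set.Icc (-1 : ℝ) 1)
    (hc : c ∈ Set.Icc (-1 : ℝ) 1) (h : p + c = 2 * k) : k * p = k * k := by
  obtain ⟨hk₁, hk₂⟩ := abs_le.1 (abs_le_one_of_add_eq_two_mul hp hc h)
  obtain rfl | rfl | rfl : k = -1 ∨ k = 0 ∨ k = 1 := by omega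
  all_goals push_cast at h ⊢; linarith [hp.1, hp.2, hc.1, hc.2]

end LatticeCoordinate

section SignVectors

variable {ι : Type*}

variable (ι) in
def cube : Set (ι → ℝ) := {y | ∀ i, y i ∈ Set.Icc (-1 : ℝ) 1}

lemma convex_cube : Convex ℝ (cube ι) := by
  simpa [cube, Set.pi] using convex_pi (𝕜 := ℝ) (s := Set.univ) fun _ _ => convex_Icc (-1 : ℝ) 1

variable [DecidableEq ι]

def signVector (F : Finset ι) : ι → ℝ := fun i => if i ∈ F then 1 else -1

def signedIndicator (Sp Sn : Finset ι) : ι → ℝ :=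
  fun i => if i ∈ Sp then 1 else if i ∈ Sn then -1 else 0

lemma signVector_mem_cube (F : Finset ι) : signVector F ∈ cube ι := fun i => by
  by_cases h : i ∈ F <;> simp [signVector, h]

lemma convexHull_signVector_subset_cube (𝓕 : Set (Finset ι)) :
    convexHull ℝ (signVector '' 𝓕) ⊆ cube ι :=
  convexHull_min (Set.image_subset_iff.2 fun F _ => signVector_mem_cube F) convex_cube

lemma mul_signVector_le_mul_self {k : ℤ} (hk : |k| ≤ 1) (F : Finset ι) (i : ι) :
    k * signVector F i ≤ k * k := by
  obtain ⟨hk₁, hk₂⟩ := abs_le.1 hk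
  obtain rfl | rfl | rfl : k = -1 ∨ k = 0 ∨ k = 1 := by omega
  all_goals by_cases h : i ∈ F <;> norm_num [signVector, h]

lemma mem_of_mul_signVector_eq_mul_self {k : ℤ} {F : Finset ι} {i : ι}
    (h : k * signVector F i = k * k) : (k = 1 → i ∈ F) ∧ (k = -1 → i ∉ F) := by
  constructor <;> rintro rfl <;> by_contra hi <;> norm_num [signVector, hi] at h

variable {𝓕 : Set (Finset ι)}

lemma signedIndicator_mem_half_add_cube {Sp Sn F : Finset ι} (hF : F ∈ 𝓕) (hSp : Sp ⊆ F)
    (hSn : Disjoint Sn F) :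
    signedIndicator Sp Sn ∈ (2⁻¹ : ℝ) • (convexHull ℝ (signVector '' 𝓕) + cube ι) := by
  have hcube : (2 : ℝ) • signedIndicator Sp Sn - signVector F ∈ cube ι := fun i => by
    by_cases hp : i ∈ Sp
    · norm_num [signedIndicator, signVector, hp, hSp hp]
    by_cases hn : i ∈ Sn
    · norm_num [signedIndicator, signVector, hp, hn, Finset.disjoint_left.1 hSn hn]
    by_cases hF : i ∈ F <;> norm_num [signedIndicator, signVector, hp, hn, hF]
  refine ⟨_, Set.add_mem_add (subset_convexHull ℝ _ ⟨F, hF, rfl⟩) hcube, ?_⟩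
  show (2⁻¹ : ℝ) • _ = _
  rw [add_sub_cancel, smul_smul]
  norm_num

variable [Fintype ι]

lemma exists_compatible_of_mem_half_add_cube {x : ι → ℤ}
    (hx : (fun i => (x i : ℝ)) ∈ (2⁻¹ : ℝ) • (convexHull ℝ (signVector '' 𝓕) + cube ι)) :
    (∀ i, |x i| ≤ 1) ∧ ∃ F ∈ 𝓕, ∀ i, (x i = 1 → i ∈ F) ∧ (x i = -1 → i ∉ F) := by
  obtain ⟨_, ⟨p, hp, c, hc, rfl⟩, hpc⟩ := hx
  have hsum (i : ι) : p i + c i = 2 * x i := by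
    have := congrFun hpc i
    simp only [Pi.smul_apply, Pi.add_apply, smul_eq_mul] at this
    linarith
  have hp_cube := convexHull_signVector_subset_cube 𝓕 hp
  have hx_bound (i : ι) := abs_le_one_of_add_eq_two_mul (hp_cube i) (hc i) (hsum i)
  obtain ⟨_, ⟨F, hF, rfl⟩, hle⟩ := exists_dotProduct_le_of_mem_convexHull hp (Int.cast ∘ x)
  have hp_dot : (Int.cast ∘ x) ⬝ᵥ p = (Int.cast ∘ x) ⬝ᵥ (Int.cast ∘ x) :=
    Finset.sum_congr rfl fun i _ =>
      mul_eq_mul_self_of_add_eq_two_mul (hp_cube i) (hc i) (hsum i)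
  have hterm_le (i : ι) := mul_signVector_le_mul_self (hx_bound i) F i
  have hterm (i : ι) : (x i : ℝ) * signVector F i = x i * x i :=
    (Finset.sum_eq_sum_iff_of_le fun i _ => hterm_le i).1
      (le_antisymm (Finset.sum_le_sum fun i _ => hterm_le i) (hp_dot.symm.trans_le hle)) i
      (Finset.mem_univ i)
  exact ⟨hx_bound, F, hF, fun i => mem_of_mul_signVector_eq_mul_self (hterm i)⟩

end SignVectors

/-- **Proposition (lattice points of `½(P(D) + [−1,1]^n)`).** A lattice point `x ∈ ℤ^n` lies in
`½ ⋅ (P(D) + [−1,1]^n)` if and only if `x = e_S` for some admissible set `S` independent in `D`. -/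
theorem deltaMatroid_lattice_points (n : ℕ) (D : DeltaMatroid n) (x : Fin n → ℤ) :
    ((fun i => (x i : ℝ)) ∈
        (2⁻¹ : ℝ) •
          (convexHull ℝ
              ((fun F : Finset (Fin n) => fun i => if i ∈ F then (1 : ℝ) else -1) '' ↑D.feas)
            + {y : Fin n → ℝ | ∀ i, y i ∈ Set.Icc (-1 : ℝ) 1}))
      ↔ ∃ Sp Sn : Finset (Fin n), Disjoint Sp Sn ∧
          (∃ F ∈ D.feas, Sp ⊆ F ∧ Disjoint Sn F) ∧
          ∀ i, (x i : ℝ) = if i ∈ Sp then 1 else if i ∈ Sn then -1 else 0 := by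
  change _ ∈ (2⁻¹ : ℝ) • (convexHull ℝ (signVector '' ↑D.feas) + cube (Fin n)) ↔ _
  constructor
  · intro hx
    obtain ⟨hx_bound, F, hF, hcompat⟩ := exists_compatible_of_mem_half_add_cube hx
    refine ⟨({i | x i = 1} : Finset _), ({i | x i = -1} : Finset _),
      Finset.disjoint_filter.2 fun i _ h => by omega,
      ⟨F, hF, fun i hi => (hcompat i).1 (Finset.mem_filter.1 hi).2,
        Finset.disjoint_left.2 fun i hi => (hcompat i).2 (Finset.mem_filter.1 hi).2⟩, fun i => ?_⟩
    obtain ⟨hx₁, hx₂⟩ := abs_le.1 (hx_bound i)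
    obtain h | h | h : x i = -1 ∨ x i = 0 ∨ x i = 1 := by omega
    all_goals simp [h]
  · rintro ⟨Sp, Sn, -, ⟨F, hF, hSp, hSn⟩, hx⟩
    rw [show (fun i => (x i : ℝ)) = signedIndicator Sp Sn from funext hx]
    exact signedIndicator_mem_half_add_cube hF hSp hSn
end

section
/- Let D be a delta-matroid on [n]. Then U_D(u, v−1) = Σ_S u^{n−|S|} v^{a(S)} in ℤ[u,v], where the sum is over all admissible sets S that are independent in D and a(S) is the number of S-active elements of S. -/
open Finset
open scoped symmDiff

/-- The U-polynomial of a family `G` on ground set `E`, in `ℤ[u,v]` with `u = X 0`, `v = X 1`: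
`Σ_S u^{|E|−|S|} v^{(|S|−g(S))/2}`, the sum over admissible sets `S = (Sp, Sn)` on `E`. -/
noncomputable def Upoly {n : ℕ} (E : Finset (Fin n)) (G : Finset (Finset (Fin n))) :
    MvPolynomial (Fin 2) ℤ :=
  ∑ Sp ∈ E.powerset, ∑ Sn ∈ (E \ Sp).powerset,
    (MvPolynomial.X 0) ^ (E.card - Sp.card - Sn.card) *
      (MvPolynomial.X 1) ^ ((((Sp.card + Sn.card : ℤ)) - gFam G Sp Sn).toNat / 2)

/-- The number of `S`-active elements of an independent admissible set `S = (Sp, Sn)`: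
with `T = [n] \ (Sp ∪ Sn)` and `𝓕(T) = {F \ T : F ∈ 𝓕}` the feasible sets of the projection
`D(T)`, an element `i ∈ Sp ∪ Sn` is `S`-active if `Sp ∆ {i} ∉ 𝓕(T)` and there is no
`j ∈ Sp ∪ Sn` with `j < i` and `Sp ∆ {i, j} ∈ 𝓕(T)`. -/
noncomputable def activeCard {n : ℕ} (D : DeltaMatroid n) (Sp Sn : Finset (Fin n)) : ℕ :=
  Set.ncard {i : Fin n | i ∈ Sp ∪ Sn ∧
    Sp ∆ {i} ∉ D.feas.image (· \ ((univ : Finset (Fin n)) \ (Sp ∪ Sn))) ∧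
    ¬∃ j ∈ Sp ∪ Sn, j < i ∧
      Sp ∆ {i, j} ∈ D.feas.image (· \ ((univ : Finset (Fin n)) \ (Sp ∪ Sn)))}

/-!
Group the admissible sets by their support `W = S⁺ ∪ S⁻` and let `G = 𝓕(T)` be the projected
family of subsets of `W`. Then `(|S| − g(S))/2` is the distance `d(S⁺, G) = min_{X ∈ G} |S⁺ ∆ X|`,
and `S` is independent exactly when `S⁺ ∈ G`. So it suffices that for every family `G` of
subsets of `W` with symmetric exchange
`Σ_{Z ⊆ W} (v − 1)^{d(Z, G)} = Σ_{X ∈ G} v^{|Act X|} = Σ_{X ∈ G} Σ_{Y ⊆ Act X} (v − 1)^{|Y|}`.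
This is the bijection `(X, Y) ↦ X ∆ Y`. Exchange at the largest element of `X ∆ F` shows that it
is never `X`-active; hence the inverse image of `Z` is the `X ∈ G` minimising `Z ∆ X` in colex
order, and, since by induction at most half of `X ∆ F` is `X`-active, `d(X ∆ Y, G) = |Y|`.
-/

namespace DeltaMatroid

section Exchange
variable {α : Type*} [DecidableEq α]

def SymmetricExchange (G : Finset (Finset α)) : Prop :=
  ∀ F₁ ∈ G, ∀ F₂ ∈ G, ∀ x ∈ F₁ ∆ F₂, ∃ y ∈ F₁ ∆ F₂, F₁ ∆ {x, y} ∈ G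

lemma symmDiff_sdiff_distrib (A B T : Finset α) : (A ∆ B) \ T = (A \ T) ∆ (B \ T) := by
  ext; simp only [mem_symmDiff, mem_sdiff]; tauto

lemma SymmetricExchange.image_sdiff {G : Finset (Finset α)} (hG : SymmetricExchange G)
    (T : Finset α) : SymmetricExchange (G.image (· \ T)) := by
  simp only [SymmetricExchange, forall_mem_image]
  intro F₁ hF₁ F₂ hF₂ x hx
  rw [← symmDiff_sdiff_distrib, mem_sdiff] at hx
  obtain ⟨y, hy, hexch⟩ := hG F₁ hF₁ F₂ hF₂ x hx.1
  -- if `y` is projected away, the exchange is the single flip of `x`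
  set y' := if y ∈ T then x else y
  have hpair : ({x, y} : Finset α) \ T = {x, y'} := by
    ext z; by_cases hyT : y ∈ T <;> simp [y', hyT] <;> aesop
  refine ⟨y', ?_, mem_image.2 ⟨_, hexch, ?_⟩⟩
  · rw [← symmDiff_sdiff_distrib, mem_sdiff]
    by_cases hyT : y ∈ T <;> simp only [y', hyT, if_true, if_false] <;> tauto
  · rw [symmDiff_sdiff_distrib, hpair]

end Exchange

section Activity
variable {α : Type*} [LinearOrder α] {G : Finset (Finset α)} {W X Y Z F : Finset α}

def activeSet (G : Finset (Finset α)) (W X : Finset α) : Finset α :=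
  {i ∈ W | ∀ j ∈ W, j ≤ i → X ∆ {i, j} ∉ G}

lemma activeSet_subset : activeSet G W X ⊆ W := filter_subset _ _

lemma symmDiff_subset_of_subset (hX : X ⊆ W) (hF : F ⊆ W) : X ∆ F ⊆ W :=
  symmDiff_le_sup.trans (union_subset hX hF)

lemma max'_symmDiff_notMem_activeSet (hG : SymmetricExchange G) (hGW : ∀ F ∈ G, F ⊆ W)
    (hX : X ∈ G) (hF : F ∈ G) (hne : (X ∆ F).Nonempty) :
    (X ∆ F).max' hne ∉ activeSet G W X := by
  intro hact
  obtain ⟨y, hy, hexch⟩ := hG X hX F hF _ ((X ∆ F).max'_mem hne)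
  exact (mem_filter.1 hact).2 y (symmDiff_subset_of_subset (hGW X hX) (hGW F hF) hy)
    ((X ∆ F).le_max' y hy) hexch

lemma two_mul_card_activeSet_inter_symmDiff_le (hG : SymmetricExchange G)
    (hGW : ∀ F ∈ G, F ⊆ W) (hX : X ∈ G) (hF : F ∈ G) :
    2 * #(activeSet G W X ∩ (X ∆ F)) ≤ #(X ∆ F) := by
  induction hk : #(X ∆ F) using Nat.strong_induction_on generalizing F with
  | _ k ih =>
  obtain hD | hD := (X ∆ F).eq_empty_or_nonempty
  · simp [hD]
  set m := (X ∆ F).max' hD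
  have hmA : m ∉ activeSet G W X := max'_symmDiff_notMem_activeSet hG hGW hX hF hD
  -- exchanging from `F` towards `X` at `m` removes `m` and at most one more element `y`
  obtain ⟨y, hy, hF'⟩ := hG F hF X hX m (by rw [symmDiff_comm]; exact max'_mem _ _)
  rw [symmDiff_comm] at hy
  have hP : {m, y} ⊆ X ∆ F := insert_subset (max'_mem _ _) (singleton_subset_iff.2 hy)
  have hXF' : X ∆ (F ∆ {m, y}) = X ∆ F \ {m, y} := by
    rw [← symmDiff_assoc, symmDiff_of_ge hP]
  have hsub : activeSet G W X ∩ (X ∆ F) ⊆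
      activeSet G W X ∩ (X ∆ (F ∆ {m, y})) ∪ ({m, y} : Finset α).erase m := by
    intro i hi
    rw [mem_inter] at hi
    rw [hXF', mem_union, mem_inter, mem_sdiff, mem_erase]
    by_cases hiP : i ∈ ({m, y} : Finset α)
    · exact Or.inr ⟨fun him => hmA (him ▸ hi.1), hiP⟩
    · exact Or.inl ⟨hi.1, hi.2, hiP⟩
  have hcardP : 1 ≤ #({m, y} : Finset α) ∧ #({m, y} : Finset α) ≤ 2 :=
    ⟨card_pos.2 (insert_nonempty _ _), card_le_two⟩
  have hcard : #(X ∆ (F ∆ {m, y})) + #({m, y} : Finset α) = k := by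
    rw [hXF', card_sdiff_of_subset hP, ← hk]; have := card_le_card hP; omega
  have hIH := ih _ (by omega) hF' rfl
  have hle := (card_le_card hsub).trans (card_union_le _ _)
  rw [card_erase_of_mem (mem_insert_self _ _)] at hle
  omega

lemma card_le_card_symmDiff_symmDiff (hG : SymmetricExchange G) (hGW : ∀ F ∈ G, F ⊆ W)
    (hX : X ∈ G) (hF : F ∈ G) (hY : Y ⊆ activeSet G W X) : #Y ≤ #(Y ∆ (X ∆ F)) := by
  have hhalf := two_mul_card_activeSet_inter_symmDiff_le hG hGW hX hF
  have hYD := card_le_card (inter_subset_inter hY (subset_refl (X ∆ F)))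
  have h₁ := card_sdiff_add_card_inter Y (X ∆ F)
  have h₂ := card_sdiff_add_card_inter (X ∆ F) Y
  rw [inter_comm] at h₂
  rw [symmDiff_def, sup_eq_union, card_union_of_disjoint disjoint_sdiff_sdiff]
  omega

lemma inf'_card_symmDiff_eq (hne : G.Nonempty) (hG : SymmetricExchange G)
    (hGW : ∀ F ∈ G, F ⊆ W) (hX : X ∈ G) (hY : Y ⊆ activeSet G W X) :
    G.inf' hne (fun F => #((X ∆ Y) ∆ F)) = #Y := by
  have hshift : ∀ F, (X ∆ Y) ∆ F = Y ∆ (X ∆ F) := fun F => by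
    rw [symmDiff_comm X Y, symmDiff_assoc]
  simp_rw [hshift]
  refine le_antisymm ?_ (le_inf' _ _ fun F hF => card_le_card_symmDiff_symmDiff hG hGW hX hF hY)
  exact (inf'_le _ hX).trans_eq (by rw [symmDiff_self, symmDiff_bot])

lemma toColex_symmDiff_lt (hG : SymmetricExchange G) (hGW : ∀ F ∈ G, F ⊆ W)
    (hX : X ∈ G) (hZX : Z ∆ X ⊆ activeSet G W X) (hF : F ∈ G) (hXF : X ≠ F) :
    toColex (Z ∆ X) < toColex (Z ∆ F) := by
  have hne : (X ∆ F).Nonempty := symmDiff_nonempty.2 hXF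
  set m := (X ∆ F).max' hne
  have hmZX : m ∉ Z ∆ X := fun h => max'_symmDiff_notMem_activeSet hG hGW hX hF hne (hZX h)
  have hdiff : (Z ∆ X) ∆ (Z ∆ F) = X ∆ F := by
    rw [symmDiff_symmDiff_symmDiff_comm, symmDiff_self, bot_symmDiff]
  rw [Colex.toColex_lt_toColex_iff_exists_forall_lt]
  refine ⟨m, ?_, hmZX, fun b hb hbF => ?_⟩
  · have hmD : m ∈ (Z ∆ X) ∆ (Z ∆ F) := hdiff ▸ max'_mem _ hne
    rw [mem_symmDiff] at hmD
    tauto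
  · have hbD : b ∈ X ∆ F := hdiff ▸ mem_symmDiff.2 (Or.inl ⟨hb, hbF⟩)
    exact lt_of_le_of_ne (le_max' _ _ hbD) (ne_of_mem_of_not_mem hb hmZX)

lemma eq_of_symmDiff_subset_activeSet (hG : SymmetricExchange G) (hGW : ∀ F ∈ G, F ⊆ W)
    {X₁ X₂ : Finset α} (hX₁ : X₁ ∈ G) (hX₂ : X₂ ∈ G)
    (h₁ : Z ∆ X₁ ⊆ activeSet G W X₁) (h₂ : Z ∆ X₂ ⊆ activeSet G W X₂) : X₁ = X₂ := by
  by_contra hne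
  exact lt_asymm (toColex_symmDiff_lt hG hGW hX₁ h₁ hX₂ hne)
    (toColex_symmDiff_lt hG hGW hX₂ h₂ hX₁ (Ne.symm hne))

lemma exists_symmDiff_subset_activeSet (hne : G.Nonempty) (hGW : ∀ F ∈ G, F ⊆ W)
    (hZ : Z ⊆ W) : ∃ X ∈ G, Z ∆ X ⊆ activeSet G W X := by
  obtain ⟨X, hX, hmin⟩ := G.exists_min_image (fun F => toColex (Z ∆ F)) hne
  refine ⟨X, hX, fun i hi => mem_filter.2 ⟨symmDiff_subset_of_subset hZ (hGW X hX) hi, ?_⟩⟩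
  intro j _ hji hX'
  -- flipping `i ∈ Z ∆ X` and a smaller `j` would make `Z ∆ X` colex-smaller
  refine (hmin _ hX').not_gt ?_
  rw [← symmDiff_assoc, Colex.toColex_lt_toColex_iff_exists_forall_lt]
  refine ⟨i, hi, by simp [mem_symmDiff, hi], fun b hb hbZ => ?_⟩
  have hb' : b = i ∨ b = j := by simpa [mem_symmDiff, hbZ] using hb
  rcases hb' with rfl | rfl
  · exact absurd hi hbZ
  · exact lt_of_le_of_ne hji (ne_of_mem_of_not_mem hi hbZ).symm

theorem sum_powerset_pow_inf'_card_symmDiff {R : Type*} [CommSemiring R] (t : R)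
    (hne : G.Nonempty) (hG : SymmetricExchange G) (hGW : ∀ F ∈ G, F ⊆ W) :
    ∑ Z ∈ W.powerset, t ^ G.inf' hne (fun F => #(Z ∆ F))
      = ∑ X ∈ G, (t + 1) ^ #(activeSet G W X) := by
  have hbinom : ∀ X, (t + 1) ^ #(activeSet G W X) = ∑ Y ∈ (activeSet G W X).powerset, t ^ #Y :=
    fun X => by simpa using (sum_pow_mul_eq_add_pow t 1 (activeSet G W X)).symm
  simp_rw [hbinom]
  rw [sum_sigma']
  symm
  refine sum_bij (fun p _ => p.1 ∆ p.2) ?_ ?_ ?_ ?_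
  · rintro ⟨X, Y⟩ hXY
    rw [mem_sigma, mem_powerset] at hXY
    exact mem_powerset.2 (symmDiff_subset_of_subset (hGW X hXY.1) (hXY.2.trans activeSet_subset))
  · rintro ⟨X₁, Y₁⟩ h₁ ⟨X₂, Y₂⟩ h₂ (hZ : X₁ ∆ Y₁ = X₂ ∆ Y₂)
    simp only [mem_sigma, mem_powerset] at h₁ h₂
    obtain rfl : X₁ = X₂ := by
      refine eq_of_symmDiff_subset_activeSet hG hGW (Z := X₁ ∆ Y₁) h₁.1 h₂.1 ?_ ?_
      · rw [symmDiff_symmDiff_self']; exact h₁.2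
      · rw [hZ, symmDiff_symmDiff_self']; exact h₂.2
    rw [symmDiff_right_inj.1 hZ]
  · intro Z hZ
    obtain ⟨X, hX, hZX⟩ := exists_symmDiff_subset_activeSet hne hGW (mem_powerset.1 hZ)
    exact ⟨⟨X, Z ∆ X⟩, mem_sigma.2 ⟨hX, mem_powerset.2 hZX⟩, by
      simp only [symmDiff_comm Z X, symmDiff_symmDiff_cancel_left]⟩
  · rintro ⟨X, Y⟩ hXY
    rw [mem_sigma, mem_powerset] at hXY
    rw [inf'_card_symmDiff_eq hne hG hGW hXY.1 hXY.2]

end Activity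

lemma sum_powerset_sum_powerset_sdiff {α M : Type*} [DecidableEq α] [AddCommMonoid M]
    (E : Finset α) (f : Finset α → Finset α → M) :
    ∑ A ∈ E.powerset, ∑ B ∈ (E \ A).powerset, f A B
      = ∑ C ∈ E.powerset, ∑ A ∈ C.powerset, f A (C \ A) := by
  rw [sum_sigma', sum_sigma']
  refine sum_nbij' (fun p => ⟨p.1 ∪ p.2, p.1⟩) (fun q => ⟨q.2, q.1 \ q.2⟩) ?_ ?_ ?_ ?_ ?_
  all_goals
    rintro ⟨A, B⟩ h
    simp only [mem_sigma, mem_powerset, subset_sdiff] at h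
  · simp only [mem_sigma, mem_powerset]
    exact ⟨union_subset h.1 h.2.1, subset_union_left⟩
  · simp only [mem_sigma, mem_powerset, subset_sdiff]
    exact ⟨h.2.trans h.1, sdiff_subset.trans h.1, disjoint_sdiff_self_left⟩
  · simp only [union_sdiff_cancel_left h.2.2.symm]
  · simp only [union_sdiff_of_subset h.2]
  · simp only [union_sdiff_cancel_left h.2.2.symm]

section Projection
variable {α : Type*} [Fintype α] [DecidableEq α] {W Sp F : Finset α}

lemma sdiff_univ_sdiff (F W : Finset α) : F \ (univ \ W) = F ∩ W := by
  rw [← compl_eq_univ_sdiff, sdiff_compl, inf_eq_inter]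

lemma sdiff_univ_sdiff_eq_iff (hSp : Sp ⊆ W) :
    F \ (univ \ W) = Sp ↔ Sp ⊆ F ∧ Disjoint (W \ Sp) F := by
  rw [sdiff_univ_sdiff, disjoint_left]
  constructor
  · rintro rfl
    exact ⟨inter_subset_left,
      fun x hx hxF => (mem_sdiff.1 hx).2 (mem_inter.2 ⟨hxF, (mem_sdiff.1 hx).1⟩)⟩
  · rintro ⟨hSpF, hdisj⟩
    refine subset_antisymm (fun x hx => ?_) (subset_inter hSpF hSp)
    by_contra hxSp
    exact hdisj (mem_sdiff.2 ⟨(mem_inter.1 hx).2, hxSp⟩) (mem_inter.1 hx).1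

lemma exists_feas_iff_mem_image_sdiff {G : Finset (Finset α)} (hSp : Sp ⊆ W) :
    (∃ F ∈ G, Sp ⊆ F ∧ Disjoint (W \ Sp) F) ↔ Sp ∈ G.image (· \ (univ \ W)) := by
  simp only [mem_image, sdiff_univ_sdiff_eq_iff hSp]

lemma signed_card_eq_card_sub_two_mul_card_symmDiff (hSp : Sp ⊆ W) (F : Finset α) :
    (#(Sp ∩ F) + #((W \ Sp) \ F) - #((W \ Sp) ∩ F) - #(Sp \ F) : ℤ)
      = #W - 2 * #(Sp ∆ (F \ (univ \ W))) := by
  have hsplit : Sp ∆ (F \ (univ \ W)) = (Sp \ F) ∪ ((W \ Sp) ∩ F) := by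
    ext x
    have := @hSp x
    simp only [sdiff_univ_sdiff, mem_symmDiff, mem_union, mem_inter, mem_sdiff]
    tauto
  have hdisj : Disjoint (Sp \ F) ((W \ Sp) ∩ F) :=
    disjoint_left.2 fun x hx hx' => (mem_sdiff.1 hx).2 (mem_inter.1 hx').2
  have h₁ := card_inter_add_card_sdiff Sp F
  have h₂ := card_inter_add_card_sdiff (W \ Sp) F
  have h₃ := card_sdiff_add_card_eq_card hSp
  rw [hsplit, card_union_of_disjoint hdisj]
  push_cast
  omega

end Projection

section Polynomial
variable {n : ℕ} {G : Finset (Finset (Fin n))} {W Sp : Finset (Fin n)}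

lemma gFam_sdiff_eq_card_sub_two_mul_inf' (hne : G.Nonempty) (hSp : Sp ⊆ W) :
    gFam G Sp (W \ Sp)
      = #W - 2 * (G.image (· \ (univ \ W))).inf' (hne.image _) (fun H => #(Sp ∆ H)) := by
  rw [gFam, dif_pos hne, inf'_image]
  simp_rw [signed_card_eq_card_sub_two_mul_card_symmDiff hSp]
  obtain ⟨F₀, hF₀, hmin⟩ := exists_mem_eq_inf' hne (fun F => #(Sp ∆ (F \ (univ \ W))))
  refine le_antisymm (sup'_le _ _ fun F hF => ?_) ?_
  · have : (G.inf' hne fun F => #(Sp ∆ (F \ (univ \ W)))) ≤ #(Sp ∆ (F \ (univ \ W))) :=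
      inf'_le _ hF
    simp only [Function.comp_def]
    omega
  · simp only [Function.comp_def, hmin]
    exact le_sup' (fun F => (#W : ℤ) - 2 * #(Sp ∆ (F \ (univ \ W)))) hF₀

lemma activeCard_eq (D : DeltaMatroid n) (Sp Sn : Finset (Fin n)) :
    activeCard D Sp Sn
      = #(activeSet (D.feas.image (· \ (univ \ (Sp ∪ Sn)))) (Sp ∪ Sn) Sp) := by
  rw [activeCard, ← Set.ncard_coe_finset]
  congr 1
  ext i
  simp only [activeSet, coe_filter, Set.mem_ofPred_eq, not_exists, not_and]
  refine and_congr_right fun _ => ⟨fun ⟨hi, hlt⟩ j hj hji => ?_, fun h => ⟨?_, ?_⟩⟩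
  · rcases hji.lt_or_eq with hji | rfl
    · exact hlt j hj hji
    · simpa using hi
  · simpa using h i ‹_› le_rfl
  · exact fun j hj hji => h j hj hji.le

lemma sum_powerset_U_summand {R : Type*} [CommRing R] (u v : R) (D : DeltaMatroid n)
    (W : Finset (Fin n)) :
    ∑ Sp ∈ W.powerset, u ^ (n - #Sp - #(W \ Sp))
        * (v - 1) ^ (((#Sp + #(W \ Sp) : ℤ) - gFam D.feas Sp (W \ Sp)).toNat / 2)
      = u ^ (n - #W) * ∑ X ∈ D.feas.image (· \ (univ \ W)),
          v ^ #(activeSet (D.feas.image (· \ (univ \ W))) W X) := by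
  have hne := D.nonempty.image (· \ (univ \ W))
  have hGW : ∀ H ∈ D.feas.image (· \ (univ \ W)), H ⊆ W := by
    simp only [forall_mem_image, sdiff_univ_sdiff]
    exact fun _ _ => inter_subset_right
  have hcube := sum_powerset_pow_inf'_card_symmDiff (v - 1) hne
    (SymmetricExchange.image_sdiff D.exchange _) hGW
  rw [sub_add_cancel] at hcube
  rw [← hcube, mul_sum]
  refine sum_congr rfl fun Sp hSp => ?_
  have hSp := mem_powerset.1 hSp
  have hcard := card_sdiff_add_card_eq_card hSp
  have hexp := gFam_sdiff_eq_card_sub_two_mul_inf' (G := D.feas) D.nonempty hSp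
  congr 2
  · omega
  · omega

lemma sum_powerset_activity_summand {R : Type*} [CommRing R] (u v : R) (D : DeltaMatroid n)
    (W : Finset (Fin n)) :
    ∑ Sp ∈ W.powerset, (if ∃ F ∈ D.feas, Sp ⊆ F ∧ Disjoint (W \ Sp) F then
        u ^ (n - #Sp - #(W \ Sp)) * v ^ activeCard D Sp (W \ Sp) else 0)
      = u ^ (n - #W) * ∑ X ∈ D.feas.image (· \ (univ \ W)),
          v ^ #(activeSet (D.feas.image (· \ (univ \ W))) W X) := by
  have hGW : D.feas.image (· \ (univ \ W)) ⊆ W.powerset := by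
    simp only [subset_iff, forall_mem_image, mem_powerset, sdiff_univ_sdiff]
    exact fun _ _ => inter_subset_right
  rw [mul_sum]
  nth_rw 1 [← inter_eq_right.2 hGW]
  rw [← sum_ite_mem]
  refine sum_congr rfl fun Sp hSp => ?_
  have hSp := mem_powerset.1 hSp
  have hcard := card_sdiff_add_card_eq_card hSp
  simp only [exists_feas_iff_mem_image_sdiff hSp, activeCard_eq, union_sdiff_of_subset hSp]
  congr 3
  omega

end Polynomial

end DeltaMatroid

/-- **Theorem (activity expansion of the U-polynomial).**
`U_D(u, v−1) = Σ_S u^{n−|S|} v^{a(S)}`, the sum over the independent admissible sets `S` of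
`D`, where `a(S)` is the number of `S`-active elements. -/
theorem deltaMatroid_U_activity (n : ℕ) (D : DeltaMatroid n) :
    MvPolynomial.aeval
        ![(MvPolynomial.X 0 : MvPolynomial (Fin 2) ℤ), MvPolynomial.X 1 - 1]
        (Upoly (univ : Finset (Fin n)) D.feas)
      = ∑ Sp ∈ (univ : Finset (Fin n)).powerset,
          ∑ Sn ∈ ((univ \ Sp).powerset.filter
              fun Sn => ∃ F ∈ D.feas, Sp ⊆ F ∧ Disjoint Sn F),
            (MvPolynomial.X 0) ^ (n - Sp.card - Sn.card)
              * (MvPolynomial.X 1) ^ activeCard D Sp Sn := by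
  simp only [Upoly, map_sum, map_mul, map_pow, MvPolynomial.aeval_X, Matrix.cons_val_zero,
    Matrix.cons_val_one, card_univ, Fintype.card_fin, sum_filter]
  rw [DeltaMatroid.sum_powerset_sum_powerset_sdiff, DeltaMatroid.sum_powerset_sum_powerset_sdiff]
  refine sum_congr rfl fun W _ => ?_
  rw [DeltaMatroid.sum_powerset_U_summand, DeltaMatroid.sum_powerset_activity_summand]
end

section
/- Let D be a delta-matroid on [n]. If S is an independent admissible set with a(S) = 0, and S' is an admissible set with S'⁺ ⊆ S⁺ and S'⁻ ⊆ S⁻, then S' is independent in D and a(S') = 0. Consequently, the independent sets S of D with a(S) = 0 form a simplicial complex. -/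
open Finset
open scoped symmDiff

variable {α : Type*} [DecidableEq α]

/-- The feasible sets of the projection `D(univ \ U)` when `G` is the family of `D`. -/
def projectOnto (G : Finset (Finset α)) (U : Finset α) : Finset (Finset α) :=
  G.image (· ∩ U)

lemma image_sdiff_compl_eq_projectOnto [Fintype α] (G : Finset (Finset α)) (U : Finset α) :
    G.image (· \ (univ \ U)) = projectOnto G U := by
  simp only [← compl_eq_univ_sdiff, sdiff_compl]
  rfl

lemma inter_mem_projectOnto {G : Finset (Finset α)} {U U' X : Finset α} (hU : U' ⊆ U)
    (hX : X ∈ projectOnto G U) : X ∩ U' ∈ projectOnto G U' := by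
  obtain ⟨F, hF, rfl⟩ := mem_image.mp hX
  exact mem_image.mpr ⟨F, hF, by rw [inter_assoc, inter_eq_right.mpr hU]⟩

/-- `i` is not active for `(Sp, U \ Sp)` with respect to the projection of `G` onto `U`. -/
def IsInactive [LinearOrder α] (G : Finset (Finset α)) (U Sp : Finset α) (i : α) : Prop :=
  Sp ∆ {i} ∈ projectOnto G U ∨ ∃ j ∈ U, j < i ∧ Sp ∆ {i, j} ∈ projectOnto G U

/-- The exchange partner `j` either survives in `U'`, or disappears and leaves a
single-element exchange. -/
lemma IsInactive.inter [LinearOrder α] {G : Finset (Finset α)} {U U' Sp : Finset α} {i : α}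
    (h : IsInactive G U Sp i) (hU : U' ⊆ U) (hi : i ∈ U') :
    IsInactive G U' (Sp ∩ U') i := by
  have hproj {X : Finset α} (hX : Sp ∆ X ∈ projectOnto G U) :
      (Sp ∩ U') ∆ (X ∩ U') ∈ projectOnto G U' :=
    inf_symmDiff_distrib_right Sp X U' ▸ inter_mem_projectOnto hU hX
  rcases h with hsingle | ⟨j, -, hji, hpair⟩
  · left
    simpa only [singleton_inter_of_mem hi] using hproj hsingle
  · have hpair' := hproj hpair
    rw [insert_inter_of_mem hi] at hpair'
    by_cases hj : j ∈ U'
    · exact Or.inr ⟨j, hj, hji, by rwa [singleton_inter_of_mem hj] at hpair'⟩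
    · left
      rwa [singleton_inter_of_notMem hj, insert_empty] at hpair'

lemma activeCard_eq_zero_iff {n : ℕ} (D : DeltaMatroid n) (Sp Sn : Finset (Fin n)) :
    activeCard D Sp Sn = 0 ↔ ∀ i ∈ Sp ∪ Sn, IsInactive D.feas (Sp ∪ Sn) Sp i := by
  rw [activeCard, Set.ncard_eq_zero, Set.eq_empty_iff_forall_notMem]
  simp only [IsInactive, image_sdiff_compl_eq_projectOnto, Set.mem_ofPred_eq]
  grind

/-- **Proposition (independent sets with no active elements form a simplicial complex).**
If `S` is independent with `a(S) = 0` and `S' ⊆ S` (componentwise), then `S'` is independent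
with `a(S') = 0`. -/
theorem deltaMatroid_active_subset (n : ℕ) (D : DeltaMatroid n)
    (Sp Sn Sp' Sn' : Finset (Fin n)) (hS : Disjoint Sp Sn)
    (hind : ∃ F ∈ D.feas, Sp ⊆ F ∧ Disjoint Sn F) (ha : activeCard D Sp Sn = 0)
    (hp : Sp' ⊆ Sp) (hn : Sn' ⊆ Sn) :
    (∃ F ∈ D.feas, Sp' ⊆ F ∧ Disjoint Sn' F) ∧ activeCard D Sp' Sn' = 0 := by
  obtain ⟨F, hF, hSpF, hSnF⟩ := hind
  refine ⟨⟨F, hF, hp.trans hSpF, hSnF.mono_left hn⟩, ?_⟩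
  have hU : Sp' ∪ Sn' ⊆ Sp ∪ Sn := union_subset_union hp hn
  have hSp' : Sp ∩ (Sp' ∪ Sn') = Sp' := by
    rw [inter_union_distrib_left, inter_eq_right.mpr hp,
      disjoint_iff_inter_eq_empty.mp (hS.mono_right hn), union_empty]
  rw [activeCard_eq_zero_iff] at ha ⊢
  intro i hi
  simpa only [hSp'] using (ha i (hU hi)).inter hU hi
end
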